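/- arXiv:1808.09394 — 13 statements merged into one kernel-verified Lean document; each statement's English description precedes it below -/
import Mathlib

section
/- Steenrod's coboundary formula for the cup-1 product: for every m-cochain f and every n-cochain h with values in a commutative ring R, d(f∪₁h) = (df)∪₁h + (−1)^m · f∪₁(dh) + (−1)^{m+n−1} · f∪h + (−1)^{mn+m+n} · h∪f. -/
/-! Simplicial cochains on the full simplicial set over a vertex type `V`,
with values in a commutative ring `R`.  An `n`-cochain is a function of the
ordered tuple of vertices `(v₀, …, vₙ)`; we model vertex tuples as functions
`ℕ → V`, an `n`-cochain being a function that only depends on the first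
`n + 1` entries (the predicate `IsCochain n`). -/

namespace SimplicialCochain

variable {V R : Type*} [CommRing R]

/-- `f` is (the extension of) an `n`-cochain: it only depends on the vertices
`v₀, …, vₙ`. -/
def IsCochain (n : ℕ) (f : (ℕ → V) → R) : Prop :=
  ∀ σ τ : ℕ → V, (∀ i, i ≤ n → σ i = τ i) → f σ = f τ

/-- The simplicial coboundary of an `n`-cochain `f`:
`(df)(v₀,…,v_{n+1}) = ∑_{i=0}^{n+1} (−1)^i f(v₀,…,v̂ᵢ,…,v_{n+1})`. -/
def delta (n : ℕ) (f : (ℕ → V) → R) : (ℕ → V) → R :=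
  fun σ => ∑ i ∈ Finset.range (n + 2),
    (-1 : R) ^ i * f (fun j => if j < i then σ j else σ (j + 1))

/-- The cup product of an `m`-cochain `f` with a cochain `h`:
`(f∪h)(v₀,…,v_{m+n}) = f(v₀,…,v_m) · h(v_m,…,v_{m+n})`. -/
def cup (m : ℕ) (f h : (ℕ → V) → R) : (ℕ → V) → R :=
  fun σ => f σ * h (fun j => σ (m + j))

/-- The cup-1 product of an `m`-cochain `f` and an `n`-cochain `h`:
`(f∪₁h)(v₀,…,v_{m+n−1}) = ∑_{i=0}^{m−1} (−1)^{(m−i)(n+1)}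
  f(v₀,…,vᵢ,v_{i+n},…,v_{m+n−1}) · h(vᵢ,…,v_{i+n})`. -/
def cup1 (m n : ℕ) (f h : (ℕ → V) → R) : (ℕ → V) → R :=
  fun σ => ∑ i ∈ Finset.range m,
    (-1 : R) ^ ((m - i) * (n + 1)) *
      (f (fun j => if j ≤ i then σ j else σ (j + n - 1)) *
        h (fun j => σ (i + j)))

/-- The Steenrod square of a 2-cochain `b`: the 4-cochain
`Sq²b = b∪b + b∪₁(db)`. -/
def sq2 (b : (ℕ → V) → R) : (ℕ → V) → R :=
  cup 2 b b + cup1 2 3 b (delta 2 b)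

/-! ### Auxiliary machinery for the proof of `delta_cup1` -/

/-- Term of `d(f∪₁h)`: cup-1 index `i`, deletion index `k`. -/
private def LT (m n : ℕ) (f h : (ℕ → V) → R) (σ : ℕ → V) (i k : ℕ) : R :=
  (-1:R)^(k + (m - i) * (n + 1)) *
    (f (fun j => if j ≤ i then (if j < k then σ j else σ (j + 1))
          else (if j + n - 1 < k then σ (j + n - 1) else σ (j + n - 1 + 1))) *
     h (fun j => if i + j < k then σ (i + j) else σ (i + j + 1)))

/-- Term of `(df)∪₁h`: cup-1 index `i`, deletion index `k`. -/
private def R1T (m n : ℕ) (f h : (ℕ → V) → R) (σ : ℕ → V) (i k : ℕ) : R :=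
  (-1:R)^((m + 1 - i) * (n + 1) + k) *
    (f (fun j => if j < k then (if j ≤ i then σ j else σ (j + n - 1))
          else (if j + 1 ≤ i then σ (j + 1) else σ (j + 1 + n - 1))) *
     h (fun j => σ (i + j)))

/-- Term of `(-1)^m · f∪₁(dh)`: cup-1 index `i`, deletion index `k`. -/
private def R2T (m n : ℕ) (f h : (ℕ → V) → R) (σ : ℕ → V) (i k : ℕ) : R :=
  (-1:R)^(m + (m - i) * (n + 1 + 1) + k) *
    (f (fun j => if j ≤ i then σ j else σ (j + (n + 1) - 1)) *
     h (fun j => if j < k then σ (i + j) else σ (i + (j + 1))))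

private lemma neg_one_pow_mod (a b : ℕ) (hab : a % 2 = b % 2) : ((-1:R))^a = (-1:R)^b := by
  have h2 : ∀ c : ℕ, ((-1:R))^c = (-1:R)^(c % 2) := fun c => by
    conv_lhs => rw [← Nat.div_add_mod c 2]
    rw [pow_add, pow_mul, neg_one_sq, one_pow, one_mul]
  rw [h2 a, h2 b, hab]

private lemma term_congr (a b : ℕ) (x y x' y' : R)
    (hab : a % 2 = b % 2) (hx : x = x') (hy : y = y') :
    ((-1:R))^a * (x * y) = (-1:R)^b * (x' * y') := by
  rw [hx, hy, neg_one_pow_mod a b hab]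

private lemma term_cancel (a b : ℕ) (x y x' y' : R)
    (hab : (a + b) % 2 = 1) (hx : x = x') (hy : y = y') :
    ((-1:R))^a * (x * y) + (-1:R)^b * (x' * y') = 0 := by
  rw [hx, hy, neg_one_pow_mod a (b+1) (by omega), pow_succ]
  ring

private lemma term_cancel2 (a b : ℕ) (x y : R)
    (hab : (a + b) % 2 = 1) :
    ((-1:R))^a * (x * y) + (-1:R)^b * (y * x) = 0 := by
  rw [neg_one_pow_mod (R := R) a (b+1) (by omega), pow_succ]
  ring

section TermLemmas

variable (m n : ℕ) (f h : (ℕ → V) → R) (σ : ℕ → V)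

/-- Region A: a deletion in the front part of `f`'s arguments. -/
private lemma regionA (hf : IsCochain m f) (hh : IsCochain n h)
    (i k : ℕ) (hi : i < m) (hk : k < i + 1) :
    LT m n f h σ i k = R1T m n f h σ (i + 1) k := by
  simp only [LT, R1T]
  refine term_congr _ _ _ _ _ _ ?_ (hf _ _ ?_) (hh _ _ ?_)
  · rw [show m + 1 - (i + 1) = m - i from by omega]; omega
  · intro j hj
    split_ifs <;> first | rfl | (exact congrArg σ (by omega)) | (exfalso; omega)
  · intro j hj
    split_ifs <;> first | rfl | (exact congrArg σ (by omega)) | (exfalso; omega)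

/-- Region B: interior deletions of the `h`-block. -/
private lemma regionB (hf : IsCochain m f) (hh : IsCochain n h)
    (i j0 : ℕ) (hi : i < m) (hj : j0 < n) :
    LT m n f h σ i (i + 1 + j0) = R2T m n f h σ i (j0 + 1) := by
  simp only [LT, R2T]
  refine term_congr _ _ _ _ _ _ ?_ (hf _ _ ?_) (hh _ _ ?_)
  · rw [show (m - i) * (n + 1 + 1) = (m - i) * (n + 1) + (m - i) from by ring]
    generalize (m - i) * (n + 1) = E
    omega
  · intro j hj
    split_ifs <;> first | rfl | (exact congrArg σ (by omega)) | (exfalso; omega)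
  · intro j hj
    split_ifs <;> first | rfl | (exact congrArg σ (by omega)) | (exfalso; omega)

/-- Region C: a deletion in the back part of `f`'s arguments. -/
private lemma regionC (hf : IsCochain m f) (hh : IsCochain n h)
    (i j0 : ℕ) (hi : i < m) (hj : j0 < m - i) :
    LT m n f h σ i (i + n + 1 + j0) = R1T m n f h σ i (i + 2 + j0) := by
  simp only [LT, R1T]
  refine term_congr _ _ _ _ _ _ ?_ (hf _ _ ?_) (hh _ _ ?_)
  · rw [show m + 1 - i = (m - i) + 1 from by omega, add_mul, one_mul]
    generalize (m - i) * (n + 1) = E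
    omega
  · intro j hj
    split_ifs <;> first | rfl | (exact congrArg σ (by omega)) | (exfalso; omega)
  · intro j hj
    split_ifs <;> first | rfl | (exact congrArg σ (by omega)) | (exfalso; omega)

private lemma cancelP (hf : IsCochain m f) (hh : IsCochain n h)
    (i : ℕ) (hi : i < m) :
    R1T m n f h σ (i + 1) (i + 1) + R2T m n f h σ i 0 = 0 := by
  simp only [R1T, R2T]
  refine term_cancel _ _ _ _ _ _ ?_ (hf _ _ ?_) (hh _ _ ?_)
  · rw [show m + 1 - (i + 1) = m - i from by omega,
       show (m - i) * (n + 1 + 1) = (m - i) * (n + 1) + (m - i) from by ring]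
    generalize (m - i) * (n + 1) = E
    omega
  · intro j hj
    split_ifs <;> first | rfl | (exact congrArg σ (by omega)) | (exfalso; omega)
  · intro j hj
    split_ifs <;> first | rfl | (exact congrArg σ (by omega)) | (exfalso; omega)

private lemma cancelQ (hf : IsCochain m f) (hh : IsCochain n h)
    (i : ℕ) (hi : i < m) :
    R1T m n f h σ i (i + 1) + R2T m n f h σ i (n + 1) = 0 := by
  simp only [R1T, R2T]
  refine term_cancel _ _ _ _ _ _ ?_ (hf _ _ ?_) (hh _ _ ?_)
  · rw [show m + 1 - i = (m - i) + 1 from by omega, add_mul, one_mul,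
       show (m - i) * (n + 1 + 1) = (m - i) * (n + 1) + (m - i) from by ring]
    generalize (m - i) * (n + 1) = E
    omega
  · intro j hj
    split_ifs <;> first | rfl | (exact congrArg σ (by omega)) | (exfalso; omega)
  · intro j hj
    split_ifs <;> first | rfl | (exact congrArg σ (by omega)) | (exfalso; omega)

private lemma cancelP0 (hf : IsCochain m f) (hh : IsCochain n h) :
    R1T m n f h σ 0 0
      + (-1:R)^(m * n + m + n) * (h σ * f (fun j => σ (n + j))) = 0 := by
  simp only [R1T]
  rw [hf _ (fun j => σ (n + j)) (by
        intro j hj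
        split_ifs <;> first | rfl | (exact congrArg σ (by omega)) | (exfalso; omega)),
     hh _ σ (by intro j hj; exact congrArg σ (by omega))]
  refine term_cancel2 _ _ _ _ ?_
  rw [show (m + 1 - 0) * (n + 1) = m * n + m + n + 1 from by rw [Nat.sub_zero]; ring]
  generalize m * n = E
  omega

private lemma cancelQm (hf : IsCochain m f) (hh : IsCochain n h) :
    R1T m n f h σ m (m + 1)
      + (-1:R)^(m + n + 1) * (f σ * h (fun j => σ (m + j))) = 0 := by
  simp only [R1T]
  refine term_cancel _ _ _ _ _ _ ?_ (hf _ _ ?_) rfl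
  · rw [show m + 1 - m = 1 from by omega, one_mul]
    omega
  · intro j hj
    split_ifs <;> first | rfl | (exact congrArg σ (by omega)) | (exfalso; omega)

end TermLemmas

/-- **Steenrod's coboundary formula for the cup-1 product**: for every
`m`-cochain `f` and every `n`-cochain `h`,
`d(f∪₁h) = (df)∪₁h + (−1)^m·f∪₁(dh) + (−1)^{m+n−1}·f∪h + (−1)^{mn+m+n}·h∪f`.
(The exponent `m+n−1` is written `m+n+1`, which has the same parity.) -/
theorem delta_cup1 (m n : ℕ) (f h : (ℕ → V) → R)
    (hf : IsCochain m f) (hh : IsCochain n h) :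
    delta (m + n - 1) (cup1 m n f h) =
      cup1 (m + 1) n (delta m f) h
        + ((-1 : R) ^ m) • cup1 m (n + 1) f (delta n h)
        + ((-1 : R) ^ (m + n + 1)) • cup m f h
        + ((-1 : R) ^ (m * n + m + n)) • cup n h f := by
  rcases Nat.eq_zero_or_pos m with hm | hm
  · -- the degenerate case `m = 0`
    subst hm
    funext σ
    simp only [delta, cup1, cup, Pi.add_apply, Pi.smul_apply, smul_eq_mul,
      Finset.range_zero, Finset.sum_empty, mul_zero, Finset.sum_const_zero,
      Finset.range_one, Finset.sum_singleton, zero_add, pow_zero, one_mul,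
      Finset.sum_range_succ, Finset.sum_range_zero]
    rw [hf (fun j => if j < 0 then (if j ≤ 0 then σ j else σ (j + n - 1))
            else (if j + 1 ≤ 0 then σ (j + 1) else σ (j + 1 + n - 1)))
          (fun j => σ (n + j)) (by
            intro j hj
            interval_cases j
            simp only [Nat.not_lt_zero, if_false, Nat.add_eq_zero, Nat.succ_ne_zero,
              false_and, Nat.le_zero]
            exact congrArg σ (by omega)),
        hf (fun j => if j < 0 + 1 then (if j ≤ 0 then σ j else σ (j + n - 1))
            else (if j + 1 ≤ 0 then σ (j + 1) else σ (j + 1 + n - 1)))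
          σ (by
            intro j hj
            interval_cases j
            simp),
        show (1 - 0) * (n + 1) = n + 1 from by omega,
        show 0 * n + 0 + n = n from by omega]
    ring
  · -- the main case `1 ≤ m`
    funext σ
    simp only [Pi.add_apply, Pi.smul_apply, smul_eq_mul, cup]
    have hmn : m + n - 1 + 2 = m + n + 1 := by omega
    -- Step 1: the three double-sum descriptions
    have hL : delta (m + n - 1) (cup1 m n f h) σ
        = ∑ i ∈ Finset.range m, ∑ k ∈ Finset.range (m + n + 1), LT m n f h σ i k := by
      have h0 : delta (m + n - 1) (cup1 m n f h) σ
          = ∑ k ∈ Finset.range (m + n + 1), ∑ i ∈ Finset.range m, LT m n f h σ i k := by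
        simp only [delta, cup1, hmn]
        refine Finset.sum_congr rfl fun k _ => ?_
        rw [Finset.mul_sum]
        refine Finset.sum_congr rfl fun i _ => ?_
        simp only [LT]
        ring
      exact h0.trans Finset.sum_comm
    have hR1 : cup1 (m + 1) n (delta m f) h σ
        = ∑ i ∈ Finset.range (m + 1), ∑ k ∈ Finset.range (m + 2), R1T m n f h σ i k := by
      simp only [cup1, delta, Finset.sum_mul, Finset.mul_sum]
      refine Finset.sum_congr rfl fun i _ => Finset.sum_congr rfl fun k _ => ?_
      simp only [R1T]
      ring
    have hR2 : (-1:R)^m * cup1 m (n + 1) f (delta n h) σ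
        = ∑ i ∈ Finset.range m, ∑ k ∈ Finset.range (n + 2), R2T m n f h σ i k := by
      simp only [cup1, delta, Finset.sum_mul, Finset.mul_sum]
      refine Finset.sum_congr rfl fun i _ => Finset.sum_congr rfl fun k _ => ?_
      simp only [R2T]
      ring
    -- Step 2: split the inner ranges into regions
    have hLs : ∑ i ∈ Finset.range m, ∑ k ∈ Finset.range (m + n + 1), LT m n f h σ i k
        = (∑ i ∈ Finset.range m, ∑ k ∈ Finset.range (i + 1), LT m n f h σ i k)
          + (∑ i ∈ Finset.range m, ∑ j ∈ Finset.range n, LT m n f h σ i (i + 1 + j))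
          + (∑ i ∈ Finset.range m, ∑ j ∈ Finset.range (m - i), LT m n f h σ i (i + n + 1 + j)) := by
      rw [← Finset.sum_add_distrib, ← Finset.sum_add_distrib]
      refine Finset.sum_congr rfl fun i hi => ?_
      rw [Finset.mem_range] at hi
      rw [Finset.range_eq_Ico,
        ← Finset.sum_Ico_consecutive _ (by omega : 0 ≤ i + n + 1) (by omega : i + n + 1 ≤ m + n + 1),
        ← Finset.sum_Ico_consecutive _ (by omega : 0 ≤ i + 1) (by omega : i + 1 ≤ i + n + 1),
        ← Finset.range_eq_Ico,
        Finset.sum_Ico_eq_sum_range, show i + n + 1 - (i + 1) = n from by omega,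
        Finset.sum_Ico_eq_sum_range, show m + n + 1 - (i + n + 1) = m - i from by omega]
    have hR1s : ∑ i ∈ Finset.range (m + 1), ∑ k ∈ Finset.range (m + 2), R1T m n f h σ i k
        = (∑ i ∈ Finset.range (m + 1), ∑ k ∈ Finset.range i, R1T m n f h σ i k)
          + (∑ i ∈ Finset.range (m + 1), R1T m n f h σ i i)
          + (∑ i ∈ Finset.range (m + 1), R1T m n f h σ i (i + 1))
          + (∑ i ∈ Finset.range (m + 1), ∑ j ∈ Finset.range (m - i), R1T m n f h σ i (i + 2 + j)) := by
      rw [← Finset.sum_add_distrib, ← Finset.sum_add_distrib, ← Finset.sum_add_distrib]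
      refine Finset.sum_congr rfl fun i hi => ?_
      rw [Finset.mem_range] at hi
      rw [Finset.range_eq_Ico,
        ← Finset.sum_Ico_consecutive _ (by omega : 0 ≤ i + 2) (by omega : i + 2 ≤ m + 2),
        ← Finset.sum_Ico_consecutive _ (by omega : 0 ≤ i) (by omega : i ≤ i + 2),
        ← Finset.range_eq_Ico,
        show i + 2 = i + 1 + 1 from rfl,
        Finset.sum_Ico_succ_top (by omega : i ≤ i + 1),
        Finset.sum_Ico_succ_top (by omega : i ≤ i),
        Finset.Ico_self, Finset.sum_empty, zero_add,
        Finset.sum_Ico_eq_sum_range, show m + 1 + 1 - (i + 1 + 1) = m - i from by omega]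
      ring
    have hR2s : ∑ i ∈ Finset.range m, ∑ k ∈ Finset.range (n + 2), R2T m n f h σ i k
        = (∑ i ∈ Finset.range m, R2T m n f h σ i 0)
          + (∑ i ∈ Finset.range m, ∑ j ∈ Finset.range n, R2T m n f h σ i (j + 1))
          + (∑ i ∈ Finset.range m, R2T m n f h σ i (n + 1)) := by
      rw [← Finset.sum_add_distrib, ← Finset.sum_add_distrib]
      refine Finset.sum_congr rfl fun i _ => ?_
      rw [Finset.sum_range_succ, Finset.sum_range_succ']
      ring
    -- Step 3: the region identifications
    have EA : ∑ i ∈ Finset.range (m + 1), ∑ k ∈ Finset.range i, R1T m n f h σ i k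
        = ∑ i ∈ Finset.range m, ∑ k ∈ Finset.range (i + 1), LT m n f h σ i k := by
      have e : ∑ i ∈ Finset.range (m + 1), ∑ k ∈ Finset.range i, R1T m n f h σ i k
          = (∑ i ∈ Finset.range m, ∑ k ∈ Finset.range (i + 1), R1T m n f h σ (i + 1) k)
            + ∑ k ∈ Finset.range 0, R1T m n f h σ 0 k :=
        Finset.sum_range_succ' (fun i => ∑ k ∈ Finset.range i, R1T m n f h σ i k) m
      rw [e, Finset.sum_range_zero, add_zero]
      refine Finset.sum_congr rfl fun i hi => Finset.sum_congr rfl fun k hk => ?_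
      rw [Finset.mem_range] at hi hk
      exact (regionA m n f h σ hf hh i k hi hk).symm
    have EB : ∑ i ∈ Finset.range m, ∑ j ∈ Finset.range n, R2T m n f h σ i (j + 1)
        = ∑ i ∈ Finset.range m, ∑ j ∈ Finset.range n, LT m n f h σ i (i + 1 + j) := by
      refine Finset.sum_congr rfl fun i hi => Finset.sum_congr rfl fun j hj => ?_
      rw [Finset.mem_range] at hi hj
      exact (regionB m n f h σ hf hh i j hi hj).symm
    have EC : ∑ i ∈ Finset.range (m + 1), ∑ j ∈ Finset.range (m - i), R1T m n f h σ i (i + 2 + j)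
        = ∑ i ∈ Finset.range m, ∑ j ∈ Finset.range (m - i), LT m n f h σ i (i + n + 1 + j) := by
      have e : ∑ i ∈ Finset.range (m + 1), ∑ j ∈ Finset.range (m - i), R1T m n f h σ i (i + 2 + j)
          = (∑ i ∈ Finset.range m, ∑ j ∈ Finset.range (m - i), R1T m n f h σ i (i + 2 + j))
            + ∑ j ∈ Finset.range (m - m), R1T m n f h σ m (m + 2 + j) :=
        Finset.sum_range_succ (fun i => ∑ j ∈ Finset.range (m - i), R1T m n f h σ i (i + 2 + j)) m
      rw [e, Nat.sub_self, Finset.sum_range_zero, add_zero]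
      refine Finset.sum_congr rfl fun i hi => Finset.sum_congr rfl fun j hj => ?_
      rw [Finset.mem_range] at hi hj
      exact (regionC m n f h σ hf hh i j hi hj).symm
    -- Step 4: the cancellations
    have EP : (∑ i ∈ Finset.range (m + 1), R1T m n f h σ i i)
        + (∑ i ∈ Finset.range m, R2T m n f h σ i 0)
        + (-1:R)^(m * n + m + n) * (h σ * f (fun j => σ (n + j))) = 0 := by
      have e : ∑ i ∈ Finset.range (m + 1), R1T m n f h σ i i
          = (∑ i ∈ Finset.range m, R1T m n f h σ (i + 1) (i + 1)) + R1T m n f h σ 0 0 :=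
        Finset.sum_range_succ' (fun i => R1T m n f h σ i i) m
      rw [e]
      have h1 : (∑ i ∈ Finset.range m, R1T m n f h σ (i + 1) (i + 1))
          + (∑ i ∈ Finset.range m, R2T m n f h σ i 0) = 0 := by
        rw [← Finset.sum_add_distrib]
        exact Finset.sum_eq_zero fun i hi =>
          cancelP m n f h σ hf hh i (Finset.mem_range.mp hi)
      linear_combination h1 + cancelP0 m n f h σ hf hh
    have EQ : (∑ i ∈ Finset.range (m + 1), R1T m n f h σ i (i + 1))
        + (∑ i ∈ Finset.range m, R2T m n f h σ i (n + 1))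
        + (-1:R)^(m + n + 1) * (f σ * h (fun j => σ (m + j))) = 0 := by
      rw [Finset.sum_range_succ]
      have h1 : (∑ i ∈ Finset.range m, R1T m n f h σ i (i + 1))
          + (∑ i ∈ Finset.range m, R2T m n f h σ i (n + 1)) = 0 := by
        rw [← Finset.sum_add_distrib]
        exact Finset.sum_eq_zero fun i hi =>
          cancelQ m n f h σ hf hh i (Finset.mem_range.mp hi)
      linear_combination h1 + cancelQm m n f h σ hf hh
    -- Step 5: put everything together
    rw [hL, hR1, hR2, hLs, hR1s, hR2s]
    linear_combination -EA - EB - EC - EP - EQ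

end SimplicialCochain
end

section
/- Graded commutativity of the cup product up to an explicit coboundary: if f is an m-cocycle and h is an n-cocycle with values in a commutative ring R, then f∪h − (−1)^{mn} · h∪f = (−1)^{m+n−1} · d(f∪₁h). -/
/-! Simplicial cochains on the full simplicial set over a vertex type `V`,
with values in a commutative ring `R`.  An `n`-cochain is a function of the
ordered tuple of vertices `(v₀, …, vₙ)`; we model vertex tuples as functions
`ℕ → V`, an `n`-cochain being a function that only depends on the first
`n + 1` entries (the predicate `IsCochain n`). -/

namespace SimplicialCochain

variable {V R : Type*} [CommRing R]

private def del (k : ℕ) (σ : ℕ → V) : ℕ → V := fun j => if j < k then σ j else σ (j + 1)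
private def shf (i : ℕ) (σ : ℕ → V) : ℕ → V := fun j => σ (i + j)
private def Af (n i : ℕ) (σ : ℕ → V) : ℕ → V := fun j => if j ≤ i then σ j else σ (j + n - 1)
private def Cf (n i : ℕ) (σ : ℕ → V) : ℕ → V := fun j => if j ≤ i then σ j else σ (j + n)

private lemma pow_neg_one_mod (a : ℕ) : ((-1 : R)) ^ a = (-1) ^ (a % 2) := by
  conv_lhs => rw [← Nat.div_add_mod a 2]
  rw [pow_add, pow_mul]; norm_num

private lemma pow_neg_one_congr {a b : ℕ} (hab : a % 2 = b % 2) : ((-1 : R)) ^ a = (-1) ^ b := by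
  rw [pow_neg_one_mod a, pow_neg_one_mod b, hab]

-- zone 1 lemmas (k ≤ i)
private lemma L1 {k i : ℕ} (n : ℕ) (hk : k ≤ i) (σ : ℕ → V) :
    Af n i (del k σ) = del k (Af n (i+1) σ) := by
  funext j; simp only [Af, del]
  split_ifs <;> first | rfl | (congr 1; omega) | (exfalso; omega)

private lemma L1h {k i : ℕ} (hk : k ≤ i) (σ : ℕ → V) :
    shf i (del k σ) = shf (i+1) σ := by
  funext j; simp only [shf, del]
  split_ifs <;> first | rfl | (congr 1; omega) | (exfalso; omega)

-- zone 2 lemmas (i < k ≤ i + n)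
private lemma L3f {k i : ℕ} (n : ℕ) (hk1 : i < k) (hk2 : k ≤ i + n) (σ : ℕ → V) :
    Af n i (del k σ) = Cf n i σ := by
  funext j; simp only [Af, Cf, del]
  split_ifs <;> first | rfl | (congr 1; omega) | (exfalso; omega)

private lemma L3h {k i : ℕ} (hk1 : i < k) (σ : ℕ → V) :
    shf i (del k σ) = del (k - i) (shf i σ) := by
  funext j; simp only [shf, del]
  split_ifs <;> first | rfl | (congr 1; omega) | (exfalso; omega)

-- zone 3 lemmas (k ≥ i + n + 1)
private lemma L2f {k i : ℕ} (n : ℕ) (hk : i + n + 1 ≤ k) (σ : ℕ → V) :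
    Af n i (del k σ) = del (k - n + 1) (Af n i σ) := by
  funext j; simp only [Af, del]
  split_ifs <;> first | rfl | (congr 1; omega) | (exfalso; omega)

private lemma L2h {k i : ℕ} (n : ℕ) (hk : i + n + 1 ≤ k) (σ : ℕ → V) :
    ∀ j, j ≤ n → shf i (del k σ) j = shf i σ j := by
  intro j hj; simp only [shf, del]
  split_ifs <;> first | rfl | (congr 1; omega) | (exfalso; omega)

-- boundary lemmas
private lemma Lb1 (n i : ℕ) (σ : ℕ → V) : del (i+1) (Af n i σ) = Cf n i σ := by
  funext j; simp only [Af, Cf, del]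
  split_ifs <;> first | rfl | (congr 1; omega) | (exfalso; omega)

private lemma Lb2 (n i : ℕ) (σ : ℕ → V) : del (i+1) (Af n (i+1) σ) = Cf n i σ := by
  funext j; simp only [Af, Cf, del]
  split_ifs <;> first | rfl | (congr 1; omega) | (exfalso; omega)

private lemma Lb3 (n : ℕ) (σ : ℕ → V) : del 0 (Af n 0 σ) = shf n σ := by
  funext j; simp only [Af, shf, del]
  split_ifs <;> first | rfl | (congr 1; omega) | (exfalso; omega)

private lemma Lb4 (n m : ℕ) (σ : ℕ → V) : ∀ j, j ≤ m → del (m+1) (Af n m σ) j = σ j := by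
  intro j hj; simp only [Af, del]
  split_ifs <;> first | rfl | (congr 1; omega) | (exfalso; omega)

private lemma Ldel0 (i : ℕ) (σ : ℕ → V) : del 0 (shf i σ) = shf (i+1) σ := by
  funext j; simp only [shf, del]
  split_ifs <;> first | rfl | (congr 1; omega) | (exfalso; omega)

private lemma Ldeln (n i : ℕ) (σ : ℕ → V) : ∀ j, j ≤ n → del (n+1) (shf i σ) j = shf i σ j := by
  intro j hj; simp only [shf, del]
  split_ifs <;> first | rfl | (congr 1; omega) | (exfalso; omega)

private lemma Lshf0 (σ : ℕ → V) : shf 0 σ = σ := by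
  funext j; simp only [shf]; congr 1; omega

private lemma key_sum {m : ℕ} {f : (ℕ → V) → R} (hfc : delta m f = 0) (τ : ℕ → V) :
    ∑ k ∈ Finset.range (m + 2), (-1 : R) ^ k * f (del k τ) = 0 := by
  have := congrFun hfc τ
  exact this


private def S1 (n : ℕ) (f : (ℕ → V) → R) (σ : ℕ → V) (i : ℕ) : R :=
  ∑ k ∈ Finset.range (i + 1), (-1) ^ k * f (del k (Af n (i + 1) σ))

private def S3 (m n : ℕ) (f : (ℕ → V) → R) (σ : ℕ → V) (i : ℕ) : R :=
  ∑ k ∈ Finset.Ico (i + 2) (m + 2), (-1) ^ k * f (del k (Af n i σ))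

private def psi (m n : ℕ) (f h : (ℕ → V) → R) (σ : ℕ → V) (i : ℕ) : R :=
  (-1) ^ ((m - i) * (n + 1)) * (S1 n f σ i - (-1) ^ i * f (Cf n i σ)) * h (shf (i + 1) σ)

private lemma zone2 {n : ℕ} {h : (ℕ → V) → R} (hh : IsCochain n h)
    (hhc : delta n h = 0) (i : ℕ) (σ : ℕ → V) :
    ∑ k ∈ Finset.Ico (i + 1) (i + n + 1), (-1 : R) ^ k * h (del (k - i) (shf i σ)) =
      (-1) ^ (i + 1) * h (shf (i + 1) σ) + (-1) ^ (i + n) * h (shf i σ) := by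
  have key := key_sum hhc (shf i σ)
  rw [Finset.sum_range_succ, Finset.sum_range_succ'] at key
  -- key : (∑ k ∈ range n, (-1)^(k+1) * h (del (k+1) (shf i σ))) + (-1)^0 * h (del 0 _)
  --        + (-1)^(n+1) * h (del (n+1) _) = 0
  rw [Finset.sum_Ico_eq_sum_range]
  have hn : i + n + 1 - (i + 1) = n := by omega
  rw [hn]
  have e1 : ∀ k ∈ Finset.range n,
      (-1 : R) ^ (i + 1 + k) * h (del (i + 1 + k - i) (shf i σ))
        = (-1) ^ (i + 1) * ((-1) ^ (k + 1) * h (del (k + 1) (shf i σ))) * (-1) := by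
    intro k hk
    have : i + 1 + k - i = k + 1 := by omega
    rw [this]; ring
  rw [Finset.sum_congr rfl e1, ← Finset.sum_mul, ← Finset.mul_sum]
  have e2 : ∑ k ∈ Finset.range n, (-1 : R) ^ (k + 1) * h (del (k + 1) (shf i σ))
      = -((-1) ^ 0 * h (del 0 (shf i σ))) - (-1) ^ (n + 1) * h (del (n + 1) (shf i σ)) := by
    linear_combination key
  rw [e2, Ldel0]
  have e3 : h (del (n + 1) (shf i σ)) = h (shf i σ) := hh _ _ (Ldeln n i σ)
  rw [e3]; ring

private lemma zone3 {m n : ℕ} {f : (ℕ → V) → R} (i : ℕ) (hi : i < m) (σ : ℕ → V) :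
    ∑ k ∈ Finset.Ico (i + n + 1) (m + n + 1), (-1 : R) ^ k * f (del (k - n + 1) (Af n i σ)) =
      (-1) ^ (n + 1) * S3 m n f σ i := by
  rw [S3, Finset.sum_Ico_eq_sum_range, Finset.sum_Ico_eq_sum_range]
  have e1 : m + n + 1 - (i + n + 1) = m - i := by omega
  have e2 : m + 2 - (i + 2) = m - i := by omega
  rw [e1, e2, Finset.mul_sum]
  refine Finset.sum_congr rfl fun r hr => ?_
  have e3 : i + n + 1 + r - n + 1 = i + 2 + r := by omega
  rw [e3]
  have e4 : (-1 : R) ^ (i + n + 1 + r) = (-1) ^ (n + 1) * (-1) ^ (i + 2 + r) := by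
    rw [← pow_add]
    exact pow_neg_one_congr (by omega)
  rw [e4]; ring

private lemma inner_eq {m n : ℕ} {f h : (ℕ → V) → R} (hh : IsCochain n h)
    (hhc : delta n h = 0) (σ : ℕ → V) {i : ℕ} (hi : i < m) :
    ∑ k ∈ Finset.range (m + n + 1),
        (-1 : R) ^ k * ((-1) ^ ((m - i) * (n + 1)) * (f (Af n i (del k σ)) * h (shf i (del k σ))))
      = (-1) ^ ((m - i) * (n + 1)) *
          (S1 n f σ i * h (shf (i + 1) σ)
            + ((-1) ^ (i + 1) * h (shf (i + 1) σ) + (-1) ^ (i + n) * h (shf i σ)) * f (Cf n i σ)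
            + (-1) ^ (n + 1) * S3 m n f σ i * h (shf i σ)) := by
  rw [Finset.range_eq_Ico,
    ← Finset.sum_Ico_consecutive _ (by omega : (0:ℕ) ≤ i + n + 1) (by omega : i + n + 1 ≤ m + n + 1),
    ← Finset.sum_Ico_consecutive _ (by omega : (0:ℕ) ≤ i + 1) (by omega : i + 1 ≤ i + n + 1)]
  have zA : ∑ k ∈ Finset.Ico 0 (i + 1),
      (-1 : R) ^ k * ((-1) ^ ((m - i) * (n + 1)) * (f (Af n i (del k σ)) * h (shf i (del k σ))))
      = (-1) ^ ((m - i) * (n + 1)) * (S1 n f σ i * h (shf (i + 1) σ)) := by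
    rw [S1, ← Finset.range_eq_Ico, Finset.sum_mul, Finset.mul_sum]
    refine Finset.sum_congr rfl fun k hk => ?_
    have hk' : k ≤ i := by simpa [Nat.lt_succ_iff] using hk
    rw [L1 n hk' σ, L1h hk' σ]; ring
  have zB : ∑ k ∈ Finset.Ico (i + 1) (i + n + 1),
      (-1 : R) ^ k * ((-1) ^ ((m - i) * (n + 1)) * (f (Af n i (del k σ)) * h (shf i (del k σ))))
      = (-1) ^ ((m - i) * (n + 1)) *
          (((-1) ^ (i + 1) * h (shf (i + 1) σ) + (-1) ^ (i + n) * h (shf i σ)) * f (Cf n i σ)) := by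
    have step : ∀ k ∈ Finset.Ico (i + 1) (i + n + 1),
        (-1 : R) ^ k * ((-1) ^ ((m - i) * (n + 1)) * (f (Af n i (del k σ)) * h (shf i (del k σ))))
          = (-1) ^ ((m - i) * (n + 1)) * f (Cf n i σ) * ((-1) ^ k * h (del (k - i) (shf i σ))) := by
      intro k hk
      obtain ⟨hk1, hk2⟩ := Finset.mem_Ico.mp hk
      rw [L3f n (by omega) (by omega) σ, L3h (by omega) σ]; ring
    rw [Finset.sum_congr rfl step, ← Finset.mul_sum, zone2 hh hhc i σ]; ring
  have zC : ∑ k ∈ Finset.Ico (i + n + 1) (m + n + 1),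
      (-1 : R) ^ k * ((-1) ^ ((m - i) * (n + 1)) * (f (Af n i (del k σ)) * h (shf i (del k σ))))
      = (-1) ^ ((m - i) * (n + 1)) * ((-1) ^ (n + 1) * S3 m n f σ i * h (shf i σ)) := by
    have step : ∀ k ∈ Finset.Ico (i + n + 1) (m + n + 1),
        (-1 : R) ^ k * ((-1) ^ ((m - i) * (n + 1)) * (f (Af n i (del k σ)) * h (shf i (del k σ))))
          = (-1) ^ ((m - i) * (n + 1)) * h (shf i σ) * ((-1) ^ k * f (del (k - n + 1) (Af n i σ))) := by
      intro k hk
      obtain ⟨hk1, hk2⟩ := Finset.mem_Ico.mp hk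
      rw [L2f n (by omega) σ]
      have : h (shf i (del k σ)) = h (shf i σ) := hh _ _ (L2h n (by omega) σ)
      rw [this]; ring
    rw [Finset.sum_congr rfl step, ← Finset.mul_sum, zone3 i hi σ]; ring
  rw [zA, zB, zC]; ring

private lemma Ico_singleton {a b : ℕ} (hab : b = a + 1) : Finset.Ico a b = {a} := by
  subst hab; exact Nat.Ico_succ_singleton a

private lemma S3_succ {m n : ℕ} {f : (ℕ → V) → R} (hfc : delta m f = 0)
    {i : ℕ} (hi : i + 1 < m) (σ : ℕ → V) :
    S3 m n f σ (i + 1) = -S1 n f σ i - (-1) ^ (i + 1) * f (Cf n i σ)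
      - (-1) ^ (i + 2) * f (Cf n (i + 1) σ) := by
  have key := key_sum hfc (Af n (i + 1) σ)
  rw [Finset.range_eq_Ico,
    ← Finset.sum_Ico_consecutive _ (by omega : (0:ℕ) ≤ i + 3) (by omega : i + 3 ≤ m + 2),
    ← Finset.sum_Ico_consecutive _ (by omega : (0:ℕ) ≤ i + 2) (by omega : i + 2 ≤ i + 3),
    ← Finset.sum_Ico_consecutive _ (by omega : (0:ℕ) ≤ i + 1) (by omega : i + 1 ≤ i + 2),
    Ico_singleton (by omega : i + 2 = (i + 1) + 1), Ico_singleton (by omega : i + 3 = (i + 2) + 1),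
    Finset.sum_singleton, Finset.sum_singleton, Lb2 n i σ] at key
  have lb1 : del (i + 2) (Af n (i + 1) σ) = Cf n (i + 1) σ := by
    have := Lb1 n (i + 1) σ
    rwa [show i + 1 + 1 = i + 2 by omega] at this
  rw [lb1] at key
  rw [S3, S1, Finset.range_eq_Ico, show i + 1 + 2 = i + 3 by omega]
  linear_combination key

private lemma S3_zero {m n : ℕ} {f : (ℕ → V) → R} (hfc : delta m f = 0) (σ : ℕ → V) :
    S3 m n f σ 0 = -(f (shf n σ)) + f (Cf n 0 σ) := by
  have key := key_sum hfc (Af n 0 σ)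
  rw [Finset.range_eq_Ico,
    ← Finset.sum_Ico_consecutive _ (by omega : (0:ℕ) ≤ 2) (by omega : 2 ≤ m + 2),
    ← Finset.sum_Ico_consecutive _ (by omega : (0:ℕ) ≤ 1) (by omega : 1 ≤ 2),
    Ico_singleton (by omega : 1 = 0 + 1), Ico_singleton (by omega : 2 = 1 + 1),
    Finset.sum_singleton, Finset.sum_singleton, Lb3 n σ] at key
  have lb1 : del 1 (Af n 0 σ) = Cf n 0 σ := by
    have := Lb1 n 0 σ
    rwa [show 0 + 1 = 1 by omega] at this
  rw [lb1] at key
  rw [S3, show 0 + 2 = 2 by omega]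
  linear_combination key

private lemma inner_succ {m n : ℕ} {f h : (ℕ → V) → R} (hfc : delta m f = 0)
    {i : ℕ} (hi : i + 1 < m) (σ : ℕ → V) :
    (-1 : R) ^ ((m - (i + 1)) * (n + 1)) *
          (S1 n f σ (i + 1) * h (shf (i + 1 + 1) σ)
            + ((-1) ^ (i + 1 + 1) * h (shf (i + 1 + 1) σ)
                + (-1) ^ (i + 1 + n) * h (shf (i + 1) σ)) * f (Cf n (i + 1) σ)
            + (-1) ^ (n + 1) * S3 m n f σ (i + 1) * h (shf (i + 1) σ))
      = psi m n f h σ (i + 1) - psi m n f h σ i := by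
  rw [S3_succ hfc hi σ, psi, psi]
  have hs : (m - i) * (n + 1) = (m - (i + 1)) * (n + 1) + (n + 1) := by
    have e : m - i = (m - (i + 1)) + 1 := by omega
    rw [e, Nat.succ_mul]
  rw [hs, pow_add]
  ring

private lemma inner_zero {m n : ℕ} {f h : (ℕ → V) → R} (hfc : delta m f = 0) (σ : ℕ → V) :
    (-1 : R) ^ ((m - 0) * (n + 1)) *
          (S1 n f σ 0 * h (shf (0 + 1) σ)
            + ((-1) ^ (0 + 1) * h (shf (0 + 1) σ)
                + (-1) ^ (0 + n) * h (shf 0 σ)) * f (Cf n 0 σ)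
            + (-1) ^ (n + 1) * S3 m n f σ 0 * h (shf 0 σ))
      = psi m n f h σ 0 - (-1) ^ ((m + 1) * (n + 1)) * (f (shf n σ) * h (shf 0 σ)) := by
  rw [S3_zero hfc σ, psi]
  rw [show m - 0 = m by omega, show (m + 1) * (n + 1) = m * (n + 1) + (n + 1) from Nat.succ_mul m (n+1)]
  rw [pow_add]
  ring

private lemma psi_last {M n : ℕ} {f h : (ℕ → V) → R} (hf : IsCochain (M + 1) f)
    (hfc : delta (M + 1) f = 0) (σ : ℕ → V) :
    psi (M + 1) n f h σ M = (-1) ^ (M + n) * (f σ * h (shf (M + 1) σ)) := by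
  have key := key_sum hfc (Af n (M + 1) σ)
  rw [show M + 1 + 2 = M + 3 by omega, Finset.range_eq_Ico,
    ← Finset.sum_Ico_consecutive _ (by omega : (0:ℕ) ≤ M + 2) (by omega : M + 2 ≤ M + 3),
    ← Finset.sum_Ico_consecutive _ (by omega : (0:ℕ) ≤ M + 1) (by omega : M + 1 ≤ M + 2),
    Ico_singleton (by omega : M + 2 = (M + 1) + 1), Ico_singleton (by omega : M + 3 = (M + 2) + 1),
    Finset.sum_singleton, Finset.sum_singleton, Lb2 n M σ] at key
  have lb4 : f (del (M + 2) (Af n (M + 1) σ)) = f σ := by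
    refine hf _ _ fun j hj => ?_
    have := Lb4 n (M + 1) σ j hj
    rwa [show M + 1 + 1 = M + 2 by omega] at this
  rw [lb4] at key
  rw [psi, show M + 1 - M = 1 by omega, S1, Finset.range_eq_Ico]
  rw [show (1 : ℕ) * (n + 1) = n + 1 by omega]
  have e4 : (-1 : R) ^ (M + n) = (-1) ^ (n + 1) * (-1) ^ (M + 2) * (-1 : R) := by
    rw [← pow_add]
    have := pow_neg_one_congr (R := R) (show (M + n) % 2 = (n + 1 + (M + 2) + 1) % 2 by omega)
    rw [this, pow_add, pow_one]
  rw [e4]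
  linear_combination ((-1 : R) ^ (n + 1) * h (shf (M + 1) σ)) * key

private lemma main_pointwise {M n : ℕ} {f h : (ℕ → V) → R} (hf : IsCochain (M + 1) f)
    (hh : IsCochain n h) (hfc : delta (M + 1) f = 0) (hhc : delta n h = 0) (σ : ℕ → V) :
    delta (M + 1 + n - 1) (cup1 (M + 1) n f h) σ
      = (-1) ^ (M + n) * (f σ * h (shf (M + 1) σ))
        - (-1) ^ ((M + 1 + 1) * (n + 1)) * (f (shf n σ) * h (shf 0 σ)) := by
  have expand : delta (M + 1 + n - 1) (cup1 (M + 1) n f h) σ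
      = ∑ k ∈ Finset.range (M + 1 + n - 1 + 2), (-1 : R) ^ k *
          ∑ i ∈ Finset.range (M + 1),
            (-1 : R) ^ ((M + 1 - i) * (n + 1)) *
              (f (Af n i (del k σ)) * h (shf i (del k σ))) := rfl
  rw [expand, show M + 1 + n - 1 + 2 = M + 1 + n + 1 by omega]
  rw [Finset.sum_congr rfl fun k _ => Finset.mul_sum _ _ _, Finset.sum_comm]
  rw [Finset.sum_congr rfl fun i hi =>
    inner_eq hh hhc σ (Finset.mem_range.mp hi)]
  rw [Finset.sum_range_succ']
  rw [Finset.sum_congr rfl fun i hi =>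
    inner_succ hfc (by have := Finset.mem_range.mp hi; omega) σ]
  rw [Finset.sum_range_sub (psi (M + 1) n f h σ)]
  rw [inner_zero hfc σ, psi_last hf hfc σ]
  ring

private lemma f_const {f : (ℕ → V) → R} (hf : IsCochain 0 f) (hfc : delta 0 f = 0)
    (k : ℕ) (σ : ℕ → V) : f (shf k σ) = f σ := by
  induction k with
  | zero => rw [Lshf0]
  | succ k ih =>
    have key := key_sum hfc (shf k σ)
    rw [Finset.sum_range_succ, Finset.sum_range_one, Ldel0] at key
    have e : f (del 1 (shf k σ)) = f (shf k σ) := by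
      refine hf _ _ fun j hj => ?_
      interval_cases j
      simp [del]
    rw [e] at key
    have : f (shf (k + 1) σ) = f (shf k σ) := by linear_combination key
    rw [this, ih]

/-- **Graded commutativity of the cup product up to an explicit coboundary**:
if `f` is an `m`-cocycle and `h` is an `n`-cocycle, then
`f∪h − (−1)^{mn}·h∪f = (−1)^{m+n−1}·d(f∪₁h)`.
(The exponent `m+n−1` is written `m+n+1`, which has the same parity.) -/
theorem cup_comm_up_to_coboundary (m n : ℕ) (f h : (ℕ → V) → R)
    (hf : IsCochain m f) (hh : IsCochain n h)
    (hfc : delta m f = 0) (hhc : delta n h = 0) :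
    cup m f h - ((-1 : R) ^ (m * n)) • cup n h f =
      ((-1 : R) ^ (m + n + 1)) • delta (m + n - 1) (cup1 m n f h) := by
  funext σ
  obtain _ | M := m
  · -- m = 0
    have hz : cup1 0 n f h = fun _ => (0 : R) := by
      funext τ; simp [cup1]
    simp only [Pi.sub_apply, Pi.smul_apply, smul_eq_mul, hz, delta]
    simp only [mul_zero, Finset.sum_const_zero]
    have e1 : h (fun j => σ (0 + j)) = h σ := by
      have : (fun j => σ (0 + j)) = σ := Lshf0 σ
      rw [this]
    have e2 : f (fun j => σ (n + j)) = f σ := f_const hf hfc n σ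
    simp only [cup, e1, e2, Nat.zero_mul, pow_zero]
    ring
  · -- m = M + 1
    simp only [Pi.sub_apply, Pi.smul_apply, smul_eq_mul]
    have mp := main_pointwise hf hh hfc hhc σ
    rw [mp]
    have e1 : (fun j => σ (M + 1 + j)) = shf (M + 1) σ := rfl
    have e2 : (fun j => σ (n + j)) = shf n σ := rfl
    simp only [cup, e1, e2, Lshf0]
    have s1 : (-1 : R) ^ (M + 1 + n + 1) * (-1) ^ (M + n) = 1 := by
      rw [← pow_add, pow_neg_one_congr (show (M + 1 + n + 1 + (M + n)) % 2 = 0 % 2 by omega),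
        pow_zero]
    have s2 : (-1 : R) ^ (M + 1 + n + 1) * (-1) ^ ((M + 1 + 1) * (n + 1))
        = (-1) ^ ((M + 1) * n) := by
      rw [← pow_add]
      have e : M + 1 + n + 1 + (M + 1 + 1) * (n + 1) = (M + 1) * n + 2 * (M + n + 2) := by ring
      have e2 : (-1 : R) ^ (2 * (M + n + 2)) = 1 := by
        rw [pow_mul, neg_one_sq, one_pow]
      rw [e, pow_add, e2, mul_one]
    linear_combination (-(f σ * h (shf (M + 1) σ))) * s1 + (f (shf n σ) * h σ) * s2

end SimplicialCochain
end

section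
/- For every m-cocycle f with values in a commutative ring R, d(f∪₁f) = ((−1) + (−1)^m) · (f∪f); consequently, if m is even then f∪₁f is a (2m−1)-cocycle. -/
/-! Simplicial cochains on the full simplicial set over a vertex type `V`,
with values in a commutative ring `R`.  An `n`-cochain is a function of the
ordered tuple of vertices `(v₀, …, vₙ)`; we model vertex tuples as functions
`ℕ → V`, an `n`-cochain being a function that only depends on the first
`n + 1` entries (the predicate `IsCochain n`). -/

namespace SimplicialCochain

variable {V R : Type*} [CommRing R]

section Aux

private def faceX (i : ℕ) (σ : ℕ → V) : ℕ → V := fun j => if j < i then σ j else σ (j + 1)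

private def AXt (n t : ℕ) (σ : ℕ → V) : ℕ → V := fun j => if j ≤ t then σ j else σ (j + n - 1)

private def BXt (k : ℕ) (σ : ℕ → V) : ℕ → V := fun j => σ (k + j)

private def CXt (m t : ℕ) (σ : ℕ → V) : ℕ → V := fun j => if j < t then σ j else σ (j + m)

private lemma delta_eq (n : ℕ) (f : (ℕ → V) → R) (σ : ℕ → V) :
    delta n f σ = ∑ i ∈ Finset.range (n + 2), (-1 : R) ^ i * f (faceX i σ) := rfl

private lemma cup1_eq (m n : ℕ) (f h : (ℕ → V) → R) (σ : ℕ → V) :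
    cup1 m n f h σ = ∑ k ∈ Finset.range m,
      (-1 : R) ^ ((m - k) * (n + 1)) * (f (AXt n k σ) * h (BXt k σ)) := rfl

private lemma cup_eq (m : ℕ) (f h : (ℕ → V) → R) (σ : ℕ → V) :
    cup m f h σ = f σ * h (BXt m σ) := rfl

/- function identities -/

private lemma hA1 (m i k : ℕ) (σ : ℕ → V) (hm : 1 ≤ m) (h : i ≤ k) :
    AXt m k (faceX i σ) = faceX i (AXt m (k + 1) σ) := by
  funext j; simp only [AXt, faceX]; split_ifs <;> exact congrArg σ (by omega)

private lemma hB1 (i k : ℕ) (σ : ℕ → V) (h : i ≤ k) :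
    BXt k (faceX i σ) = BXt (k + 1) σ := by
  funext j; simp only [BXt, faceX]; split_ifs <;> exact congrArg σ (by omega)

private lemma hA2 (m i k : ℕ) (σ : ℕ → V) (h1 : k < i) (h2 : i ≤ k + m) :
    AXt m k (faceX i σ) = CXt m (k + 1) σ := by
  funext j; simp only [AXt, CXt, faceX]; split_ifs <;> exact congrArg σ (by omega)

private lemma hB2 (i k : ℕ) (σ : ℕ → V) (h : k ≤ i) :
    BXt k (faceX i σ) = faceX (i - k) (BXt k σ) := by
  funext j; simp only [BXt, faceX]; split_ifs <;> exact congrArg σ (by omega)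

private lemma hA3 (m i k : ℕ) (σ : ℕ → V) (hm : 1 ≤ m) (h : k + m + 1 ≤ i) :
    AXt m k (faceX i σ) = faceX (i - m + 1) (AXt m k σ) := by
  funext j; simp only [AXt, faceX]; split_ifs <;> exact congrArg σ (by omega)

private lemma hB3 (m i k : ℕ) (σ : ℕ → V) (h : k + m + 1 ≤ i) (j : ℕ) (hj : j ≤ m) :
    BXt k (faceX i σ) j = BXt k σ j := by
  simp only [BXt, faceX]; split_ifs <;> exact congrArg σ (by omega)

private lemma hAt (m t : ℕ) (σ : ℕ → V) (hm : 1 ≤ m) :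
    faceX t (AXt m t σ) = CXt m t σ := by
  funext j; simp only [AXt, CXt, faceX]; split_ifs <;> exact congrArg σ (by omega)

private lemma hAt1 (m t : ℕ) (σ : ℕ → V) (hm : 1 ≤ m) :
    faceX (t + 1) (AXt m t σ) = CXt m (t + 1) σ := by
  funext j; simp only [AXt, CXt, faceX]; split_ifs <;> exact congrArg σ (by omega)

private lemma hB0 (k : ℕ) (σ : ℕ → V) : faceX 0 (BXt k σ) = BXt (k + 1) σ := by
  funext j; simp only [BXt, faceX]; split_ifs <;> exact congrArg σ (by omega)

private lemma hBtop (m k : ℕ) (σ : ℕ → V) (j : ℕ) (hj : j ≤ m) :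
    faceX (m + 1) (BXt k σ) j = BXt k σ j := by
  simp only [BXt, faceX]; split_ifs <;> exact congrArg σ (by omega)

private lemma hC0 (m : ℕ) (σ : ℕ → V) : CXt m 0 σ = BXt m σ := by
  funext j; simp only [BXt, CXt]; split_ifs <;> exact congrArg σ (by omega)

private lemma hCtop (m : ℕ) (σ : ℕ → V) (j : ℕ) (hj : j ≤ m) : CXt m (m + 1) σ j = σ j := by
  simp only [CXt]; split_ifs <;> exact congrArg σ (by omega)

private lemma hBz (σ : ℕ → V) : BXt 0 σ = σ := by
  funext j; simp only [BXt]; exact congrArg σ (by omega)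

/- sign helper -/

private lemma npc {a b : ℕ} (h : a % 2 = b % 2) : (-1 : R) ^ a = (-1 : R) ^ b := by
  rcases Nat.even_or_odd a with ha | ha
  · have hb : Even b := Nat.even_iff.mpr (by have := Nat.even_iff.mp ha; omega)
    rw [ha.neg_one_pow, hb.neg_one_pow]
  · have hb : Odd b := Nat.odd_iff.mpr (by have := Nat.odd_iff.mp ha; omega)
    rw [ha.neg_one_pow, hb.neg_one_pow]

/- the two regrouped summands -/

private def GAx (m : ℕ) (f : (ℕ → V) → R) (σ : ℕ → V) (t i : ℕ) : R :=
  (-1) ^ ((m - t) * (m + 1) + (m + 1)) * ((-1) ^ i * f (faceX i (AXt m t σ)) * f (BXt t σ))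

private def GBx (m : ℕ) (f : (ℕ → V) → R) (σ : ℕ → V) (k r : ℕ) : R :=
  (-1) ^ ((m - k) * (m + 1) + k) * ((-1) ^ r * f (faceX r (BXt k σ)) * f (CXt m (k + 1) σ))


private def pS (m : ℕ) (f : (ℕ → V) → R) (σ : ℕ → V) (t : ℕ) : R := f (CXt m t σ) * f (BXt t σ)

private def qS (m : ℕ) (f : (ℕ → V) → R) (σ : ℕ → V) (t : ℕ) : R :=
  f (CXt m (t + 1) σ) * f (BXt t σ)

private def aS (m t : ℕ) : R := (-1) ^ ((m - t) * (m + 1) + (m + t))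

private def bS (m k : ℕ) : R := (-1) ^ ((m - k) * (m + 1) + k)

private lemma sumGA (m : ℕ) (f : (ℕ → V) → R) (hfc : delta m f = 0) (σ : ℕ → V) (t : ℕ) :
    ∑ i ∈ Finset.range (m + 2), GAx m f σ t i = 0 := by
  have h0 : ∑ i ∈ Finset.range (m + 2), (-1 : R) ^ i * f (faceX i (AXt m t σ)) = 0 := by
    have h := congrFun hfc (AXt m t σ)
    rw [delta_eq, Pi.zero_apply] at h
    exact h
  simp only [GAx]
  rw [← Finset.mul_sum, ← Finset.sum_mul, h0, zero_mul, mul_zero]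

private lemma sumGB (m : ℕ) (f : (ℕ → V) → R) (hfc : delta m f = 0) (σ : ℕ → V) (k : ℕ) :
    ∑ r ∈ Finset.range (m + 2), GBx m f σ k r = 0 := by
  have h0 : ∑ r ∈ Finset.range (m + 2), (-1 : R) ^ r * f (faceX r (BXt k σ)) = 0 := by
    have h := congrFun hfc (BXt k σ)
    rw [delta_eq, Pi.zero_apply] at h
    exact h
  simp only [GBx]
  rw [← Finset.mul_sum, ← Finset.sum_mul, h0, zero_mul, mul_zero]

end Aux

/-- For every `m`-cocycle `f`, `d(f∪₁f) = ((−1) + (−1)^m)·(f∪f)`;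
consequently, if `m` is even then `f∪₁f` is a `(2m−1)`-cocycle. -/
theorem delta_cup1_self (m : ℕ) (f : (ℕ → V) → R)
    (hf : IsCochain m f) (hfc : delta m f = 0) :
    delta (2 * m - 1) (cup1 m m f f) = ((-1 : R) + (-1 : R) ^ m) • cup m f f
    ∧ (Even m → delta (2 * m - 1) (cup1 m m f f) = 0) := by
  have main : delta (2 * m - 1) (cup1 m m f f) = ((-1 : R) + (-1 : R) ^ m) • cup m f f := by
    rcases Nat.eq_zero_or_pos m with rfl | hm
    · funext σ
      simp [delta, cup1, cup]
    · funext σ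
      rw [Pi.smul_apply, smul_eq_mul, cup_eq, delta_eq,
        show 2 * m - 1 + 2 = 2 * m + 1 from by omega]
      simp only [cup1_eq, Finset.mul_sum]
      rw [Finset.sum_comm]
      -- Step 2 : split each inner sum into the three regions
      have step2 : ∀ k ∈ Finset.range m,
          (∑ i ∈ Finset.range (2 * m + 1), (-1 : R) ^ i *
            ((-1) ^ ((m - k) * (m + 1)) *
              (f (AXt m k (faceX i σ)) * f (BXt k (faceX i σ)))))
          = (∑ i ∈ Finset.range (k + 1), GAx m f σ (k + 1) i) +
            ((((-1 : R) ^ m * (bS m k * qS m f σ k)) - bS m k * pS m f σ (k + 1)) +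
              ∑ i ∈ Finset.range (m - k), GAx m f σ k (k + 2 + i)) := by
        intro k hk
        have hk' : k < m := Finset.mem_range.mp hk
        rw [show 2 * m + 1 = (k + 1) + (m + (m - k)) from by omega,
          Finset.sum_range_add]
        nth_rewrite 2 [Finset.sum_range_add]
        have e1 : (∑ i ∈ Finset.range (k + 1), (-1 : R) ^ i *
              ((-1) ^ ((m - k) * (m + 1)) *
                (f (AXt m k (faceX i σ)) * f (BXt k (faceX i σ)))))
            = ∑ i ∈ Finset.range (k + 1), GAx m f σ (k + 1) i := by
          refine Finset.sum_congr rfl fun i hi => ?_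
          have hi' : i < k + 1 := Finset.mem_range.mp hi
          rw [hA1 m i k σ hm (by omega), hB1 i k σ (by omega)]
          have he : (m - (k + 1)) * (m + 1) + (m + 1) = (m - k) * (m + 1) := by
            have h1 : m - k = m - (k + 1) + 1 := by omega
            rw [h1]; ring
          simp only [GAx]
          rw [he]; ring
        have e2 : (∑ x ∈ Finset.range m, (-1 : R) ^ (k + 1 + x) *
              ((-1) ^ ((m - k) * (m + 1)) *
                (f (AXt m k (faceX (k + 1 + x) σ)) * f (BXt k (faceX (k + 1 + x) σ)))))
            = (((-1 : R) ^ m * (bS m k * qS m f σ k)) - bS m k * pS m f σ (k + 1)) := by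
          have e2a : (∑ x ∈ Finset.range m, (-1 : R) ^ (k + 1 + x) *
                ((-1) ^ ((m - k) * (m + 1)) *
                  (f (AXt m k (faceX (k + 1 + x) σ)) * f (BXt k (faceX (k + 1 + x) σ)))))
              = ∑ x ∈ Finset.range m, GBx m f σ k (x + 1) := by
            refine Finset.sum_congr rfl fun x hx => ?_
            have hx' : x < m := Finset.mem_range.mp hx
            rw [hA2 m (k + 1 + x) k σ (by omega) (by omega),
              hB2 (k + 1 + x) k σ (by omega),
              show k + 1 + x - k = x + 1 from by omega]
            simp only [GBx]; ring
          rw [e2a]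
          have hA : ∑ r ∈ Finset.range (m + 1 + 1), GBx m f σ k r
              = (∑ x ∈ Finset.range (m + 1), GBx m f σ k (x + 1)) + GBx m f σ k 0 :=
            Finset.sum_range_succ' _ _
          have hBb : ∑ x ∈ Finset.range (m + 1), GBx m f σ k (x + 1)
              = (∑ x ∈ Finset.range m, GBx m f σ k (x + 1)) + GBx m f σ k (m + 1) :=
            Finset.sum_range_succ _ _
          have hz : ∑ r ∈ Finset.range (m + 1 + 1), GBx m f σ k r = 0 := sumGB m f hfc σ k
          have hmid : ∑ x ∈ Finset.range m, GBx m f σ k (x + 1)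
              = - GBx m f σ k 0 - GBx m f σ k (m + 1) := by
            linear_combination hz - hA - hBb
          rw [hmid]
          simp only [GBx, bS, pS, qS]
          rw [hB0 k σ]
          have hff : f (faceX (m + 1) (BXt k σ)) = f (BXt k σ) :=
            hf _ _ fun j hj => hBtop m k σ j hj
          rw [hff]
          ring
        have e3 : (∑ x ∈ Finset.range (m - k), (-1 : R) ^ (k + 1 + (m + x)) *
              ((-1) ^ ((m - k) * (m + 1)) *
                (f (AXt m k (faceX (k + 1 + (m + x)) σ)) *
                  f (BXt k (faceX (k + 1 + (m + x)) σ)))))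
            = ∑ i ∈ Finset.range (m - k), GAx m f σ k (k + 2 + i) := by
          refine Finset.sum_congr rfl fun x hx => ?_
          have hx' : x < m - k := Finset.mem_range.mp hx
          rw [hA3 m (k + 1 + (m + x)) k σ hm (by omega),
            show k + 1 + (m + x) - m + 1 = k + 2 + x from by omega]
          have hff : f (BXt k (faceX (k + 1 + (m + x)) σ)) = f (BXt k σ) :=
            hf _ _ fun j hj => hB3 m (k + 1 + (m + x)) k σ (by omega) j hj
          rw [hff]
          simp only [GAx]; ring
        rw [e1, e2, e3]
      rw [Finset.sum_congr rfl step2, Finset.sum_add_distrib, Finset.sum_add_distrib]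
      -- regroup the GA sums
      have hsplitA : ∀ t ∈ Finset.range (m + 1),
          (∑ i ∈ Finset.range t, GAx m f σ t i) +
            ∑ i ∈ Finset.range (m - t), GAx m f σ t (t + 2 + i)
          = - GAx m f σ t t - GAx m f σ t (t + 1) := by
        intro t ht
        have ht' : t < m + 1 := Finset.mem_range.mp ht
        have h0 : ∑ i ∈ Finset.range (t + (2 + (m - t))), GAx m f σ t i = 0 := by
          rw [show t + (2 + (m - t)) = m + 2 from by omega]
          exact sumGA m f hfc σ t
        rw [Finset.sum_range_add] at h0
        rw [Finset.sum_range_add] at h0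
        have h2 : ∑ x ∈ Finset.range 2, GAx m f σ t (t + x)
            = GAx m f σ t t + GAx m f σ t (t + 1) := by
          rw [show (2 : ℕ) = 1 + 1 from rfl, Finset.sum_range_add, Finset.sum_range_one,
            Finset.sum_range_one, Nat.add_zero, Nat.add_zero]
        rw [h2] at h0
        have h3 : ∑ x ∈ Finset.range (m - t), GAx m f σ t (t + (2 + x))
            = ∑ x ∈ Finset.range (m - t), GAx m f σ t (t + 2 + x) :=
          Finset.sum_congr rfl fun x _ => by rw [show t + (2 + x) = t + 2 + x from by omega]
        rw [h3] at h0
        linear_combination h0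
      have hL1 : ∑ k ∈ Finset.range m, ∑ i ∈ Finset.range (k + 1), GAx m f σ (k + 1) i
          = ∑ t ∈ Finset.range (m + 1), ∑ i ∈ Finset.range t, GAx m f σ t i := by
        rw [Finset.sum_range_succ' (fun t => ∑ i ∈ Finset.range t, GAx m f σ t i) m]
        simp
      have hL2 : ∑ k ∈ Finset.range m, ∑ i ∈ Finset.range (m - k), GAx m f σ k (k + 2 + i)
          = ∑ t ∈ Finset.range (m + 1), ∑ i ∈ Finset.range (m - t), GAx m f σ t (t + 2 + i) := by
        rw [Finset.sum_range_succ
          (fun t => ∑ i ∈ Finset.range (m - t), GAx m f σ t (t + 2 + i)) m]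
        simp
      have hGA : (∑ k ∈ Finset.range m, ∑ i ∈ Finset.range (k + 1), GAx m f σ (k + 1) i) +
          (∑ k ∈ Finset.range m, ∑ i ∈ Finset.range (m - k), GAx m f σ k (k + 2 + i))
          = ∑ t ∈ Finset.range (m + 1), (- GAx m f σ t t - GAx m f σ t (t + 1)) := by
        rw [hL1, hL2, ← Finset.sum_add_distrib]
        exact Finset.sum_congr rfl hsplitA
      have hTA : ∑ t ∈ Finset.range (m + 1), (- GAx m f σ t t - GAx m f σ t (t + 1))
          = ∑ t ∈ Finset.range (m + 1), (aS m t * pS m f σ t - aS m t * qS m f σ t) := by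
        refine Finset.sum_congr rfl fun t ht => ?_
        simp only [GAx, aS, pS, qS]
        rw [hAt m t σ hm, hAt1 m t σ hm]
        ring
      have hq : ∑ k ∈ Finset.range m, (-1 : R) ^ m * (bS m k * qS m f σ k)
          = ∑ k ∈ Finset.range m, aS m k * qS m f σ k := by
        refine Finset.sum_congr rfl fun k hk => ?_
        simp only [aS, bS]; ring
      have hp : ∑ k ∈ Finset.range m, bS m k * pS m f σ (k + 1)
          = ∑ k ∈ Finset.range m, aS m (k + 1) * pS m f σ (k + 1) := by
        refine Finset.sum_congr rfl fun k hk => ?_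
        have hk' : k < m := Finset.mem_range.mp hk
        simp only [aS, bS]
        have he : (m - (k + 1)) * (m + 1) + (m + (k + 1)) = (m - k) * (m + 1) + k := by
          have h1 : m - k = m - (k + 1) + 1 := by omega
          rw [h1]; ring
        rw [he]
      have ham : aS m m = (1 : R) := by
        simp only [aS]
        rw [Nat.sub_self, Nat.zero_mul, Nat.zero_add]
        exact Even.neg_one_pow ⟨m, rfl⟩
      have ha0 : aS m 0 = (-1 : R) ^ m := by
        simp only [aS, Nat.sub_zero, Nat.add_zero]
        obtain ⟨c, hc⟩ := Nat.even_mul_succ_self m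
        exact npc (by rw [hc]; omega)
      have hsum : (∑ t ∈ Finset.range (m + 1), (aS m t * pS m f σ t - aS m t * qS m f σ t)) +
          (∑ k ∈ Finset.range m,
            (((-1 : R) ^ m * (bS m k * qS m f σ k)) - bS m k * pS m f σ (k + 1)))
          = (-1 : R) ^ m * pS m f σ 0 - qS m f σ m := by
        rw [Finset.sum_sub_distrib, Finset.sum_sub_distrib, hq, hp,
          Finset.sum_range_succ' (fun t => aS m t * pS m f σ t) m,
          Finset.sum_range_succ (fun t => aS m t * qS m f σ t) m]
        linear_combination (pS m f σ 0) * ha0 - (qS m f σ m) * ham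
      have hp0 : pS m f σ 0 = f (BXt m σ) * f σ := by
        simp only [pS]
        rw [hC0, hBz]
      have hqm : qS m f σ m = f σ * f (BXt m σ) := by
        simp only [qS]
        have hfs : f (CXt m (m + 1) σ) = f σ := hf _ _ fun j hj => hCtop m σ j hj
        rw [hfs]
      have hmid2 : ∑ k ∈ Finset.range m,
          (((-1 : R) ^ m * (bS m k * qS m f σ k)) - bS m k * pS m f σ (k + 1) +
            ∑ i ∈ Finset.range (m - k), GAx m f σ k (k + 2 + i))
          = (∑ k ∈ Finset.range m,
              (((-1 : R) ^ m * (bS m k * qS m f σ k)) - bS m k * pS m f σ (k + 1))) +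
            ∑ k ∈ Finset.range m, ∑ i ∈ Finset.range (m - k), GAx m f σ k (k + 2 + i) :=
        Finset.sum_add_distrib
      linear_combination hGA + hTA + hsum + ((-1 : R) ^ m) * hp0 - hqm
  refine ⟨main, fun hme => ?_⟩
  rw [main, hme.neg_one_pow, neg_add_cancel, zero_smul]

end SimplicialCochain
end

section
/- Coboundary of the Steenrod square of a 2-cochain: for every 2-cochain b with values in a commutative ring R, d(Sq²b) = (db)∪₁(db) + 2·(b∪(db)), where Sq²b = b∪b + b∪₁(db). -/
/-! Simplicial cochains on the full simplicial set over a vertex type `V`,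
with values in a commutative ring `R`.  An `n`-cochain is a function of the
ordered tuple of vertices `(v₀, …, vₙ)`; we model vertex tuples as functions
`ℕ → V`, an `n`-cochain being a function that only depends on the first
`n + 1` entries (the predicate `IsCochain n`). -/

namespace SimplicialCochain

variable {V R : Type*} [CommRing R]

/-- **Coboundary of the Steenrod square of a 2-cochain**: for every 2-cochain
`b`, `d(Sq²b) = (db)∪₁(db) + 2·(b∪(db))`. -/
theorem delta_sq2 (b : (ℕ → V) → R) (hb : IsCochain 2 b) :
    delta 4 (sq2 b) =
      cup1 3 3 (delta 2 b) (delta 2 b) + (2 : R) • cup 2 b (delta 2 b) := by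
  obtain ⟨B, hbB⟩ : ∃ B : V → V → V → R, ∀ g : ℕ → V, b g = B (g 0) (g 1) (g 2) := by
    refine ⟨fun x y z => b (fun j => if j = 0 then x else if j = 1 then y else z), fun g => ?_⟩
    apply hb
    intro i hi
    interval_cases i <;> simp
  funext σ
  simp only [sq2, delta, cup, cup1, Pi.add_apply, Pi.smul_apply, smul_eq_mul,
    Finset.sum_range_succ, Finset.sum_range_zero, hbB]
  norm_num
  ring

end SimplicialCochain
end

section
/- Let b be a ℤ-valued 2-cochain and N a positive integer such that db = N·c for some ℤ-valued 3-cochain c. Then d(Sq²b) = N²·(c∪₁c) + 2N·(b∪c); in particular, every value of d(Sq²b) is divisible by 2N when N is even, and by N when N is odd (so that (1/(2N))·Sq²b, respectively (1/N)·Sq²b, is an ℝ/ℤ-valued 4-cocycle). -/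
/-! Simplicial cochains on the full simplicial set over a vertex type `V`,
with values in a commutative ring `R`.  An `n`-cochain is a function of the
ordered tuple of vertices `(v₀, …, vₙ)`; we model vertex tuples as functions
`ℕ → V`, an `n`-cochain being a function that only depends on the first
`n + 1` entries (the predicate `IsCochain n`). -/

namespace SimplicialCochain

variable {V R : Type*} [CommRing R]

private lemma key (B : V → V → V → ℤ) :
    delta 4 (sq2 (fun σ : ℕ → V => B (σ 0) (σ 1) (σ 2))) =
      cup1 3 3 (delta 2 (fun σ : ℕ → V => B (σ 0) (σ 1) (σ 2)))
        (delta 2 (fun σ : ℕ → V => B (σ 0) (σ 1) (σ 2)))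
      + (2 : ℤ) • cup 2 (fun σ : ℕ → V => B (σ 0) (σ 1) (σ 2))
        (delta 2 (fun σ : ℕ → V => B (σ 0) (σ 1) (σ 2))) := by
  funext σ
  simp only [delta, sq2, cup, cup1, Pi.add_apply, Pi.smul_apply, smul_eq_mul,
    Finset.sum_range_succ, Finset.sum_range_zero]
  norm_num
  ring

private lemma cup1_smul (m n : ℕ) (f h : (ℕ → V) → ℤ) (a d : ℤ) :
    cup1 m n (a • f) (d • h) = (a * d) • cup1 m n f h := by
  funext σ
  simp only [cup1, Pi.smul_apply, smul_eq_mul, Finset.mul_sum]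
  exact Finset.sum_congr rfl fun i _ => by ring

private lemma cup_smul (m : ℕ) (f h : (ℕ → V) → ℤ) (d : ℤ) :
    cup m f (d • h) = d • cup m f h := by
  funext σ
  simp only [cup, Pi.smul_apply, smul_eq_mul]
  ring

/-- Let `b` be a `ℤ`-valued 2-cochain and `N` a positive integer with
`db = N·c` for a `ℤ`-valued 3-cochain `c`.  Then
`d(Sq²b) = N²·(c∪₁c) + 2N·(b∪c)`; in particular every value of `d(Sq²b)` is
divisible by `2N` when `N` is even and by `N` when `N` is odd (so that
`(1/(2N))·Sq²b`, resp. `(1/N)·Sq²b`, is an `ℝ/ℤ`-valued 4-cocycle). -/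
theorem delta_sq2_int (b c : (ℕ → V) → ℤ) (hb : IsCochain 2 b)
    (hc : IsCochain 3 c) (N : ℤ) (hN : 0 < N) (hdb : delta 2 b = N • c) :
    delta 4 (sq2 b) = (N ^ 2) • cup1 3 3 c c + (2 * N) • cup 2 b c
    ∧ (Even N → ∀ σ : ℕ → V, (2 * N) ∣ delta 4 (sq2 b) σ)
    ∧ (Odd N → ∀ σ : ℕ → V, N ∣ delta 4 (sq2 b) σ) := by
  have hbB : b = fun σ : ℕ → V =>
      (fun x y z : V => b (fun j => if j = 0 then x else if j = 1 then y else z))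
        (σ 0) (σ 1) (σ 2) := by
    funext σ
    refine hb σ _ fun i hi => ?_
    interval_cases i <;> simp
  have hmain : delta 4 (sq2 b) = (N ^ 2) • cup1 3 3 c c + (2 * N) • cup 2 b c := by
    have h := key (fun x y z : V => b (fun j => if j = 0 then x else if j = 1 then y else z))
    rw [← hbB] at h
    rw [h, hdb, cup1_smul, cup_smul]
    rw [show N * N = N ^ 2 by ring]
    ext σ
    simp only [Pi.add_apply, Pi.smul_apply, smul_eq_mul]
    ring
  refine ⟨hmain, ?_, ?_⟩
  · rintro ⟨k, hk⟩ σ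
    rw [hmain]
    simp only [Pi.add_apply, Pi.smul_apply, smul_eq_mul]
    exact Dvd.dvd.add ⟨k * cup1 3 3 c c σ, by rw [hk]; ring⟩ ⟨cup 2 b c σ, by ring⟩
  · intro _ σ
    rw [hmain]
    simp only [Pi.add_apply, Pi.smul_apply, smul_eq_mul]
    exact Dvd.dvd.add ⟨N * cup1 3 3 c c σ, by ring⟩ ⟨2 * cup 2 b c σ, by ring⟩

end SimplicialCochain
end

section
/- Variation of the Steenrod square under a gauge transformation b → b + dλ: for every 2-cochain b and every 1-cochain λ with values in a commutative ring R, Sq²(b + dλ) = Sq²b + 2·((dλ)∪b) + d(λ∪(dλ) + (dλ)∪₁b). -/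
/-! Simplicial cochains on the full simplicial set over a vertex type `V`,
with values in a commutative ring `R`.  An `n`-cochain is a function of the
ordered tuple of vertices `(v₀, …, vₙ)`; we model vertex tuples as functions
`ℕ → V`, an `n`-cochain being a function that only depends on the first
`n + 1` entries (the predicate `IsCochain n`). -/

namespace SimplicialCochain

variable {V R : Type*} [CommRing R]

/-- **Variation of the Steenrod square under a gauge transformation
`b → b + dλ`**: for every 2-cochain `b` and every 1-cochain `λ`,
`Sq²(b + dλ) = Sq²b + 2·((dλ)∪b) + d(λ∪(dλ) + (dλ)∪₁b)`. -/
theorem sq2_gauge (b lam : (ℕ → V) → R)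
    (hb : IsCochain 2 b) (hlam : IsCochain 1 lam) :
    sq2 (b + delta 1 lam) =
      sq2 b + (2 : R) • cup 2 (delta 1 lam) b
        + delta 3 (cup 1 lam (delta 1 lam) + cup1 2 2 (delta 1 lam) b) := by
  obtain ⟨B, hB⟩ : ∃ B : V → V → V → R, ∀ τ, b τ = B (τ 0) (τ 1) (τ 2) :=
    ⟨fun x y z => b (fun j => if j = 0 then x else if j = 1 then y else z),
      fun τ => hb _ _ (by intro i hi; interval_cases i <;> simp)⟩
  obtain ⟨L, hL⟩ : ∃ L : V → V → R, ∀ τ, lam τ = L (τ 0) (τ 1) :=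
    ⟨fun x y => lam (fun j => if j = 0 then x else y),
      fun τ => hlam _ _ (by intro i hi; interval_cases i <;> simp)⟩
  funext σ
  simp only [sq2, cup, cup1, delta, Pi.add_apply, Pi.smul_apply, smul_eq_mul,
    Finset.sum_range_succ, Finset.sum_range_zero, hB, hL]
  norm_num
  ring

end SimplicialCochain
end

section
/- Mod-4 additivity of the Steenrod square: let c and c' be ℤ-valued 2-cochains such that every value of dc is even. Then every value of the 4-cochain Sq²(c + 2c') − Sq²(c) − 2·d(c∪₁c') is divisible by 4. -/
/-! Simplicial cochains on the full simplicial set over a vertex type `V`,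
with values in a commutative ring `R`.  An `n`-cochain is a function of the
ordered tuple of vertices `(v₀, …, vₙ)`; we model vertex tuples as functions
`ℕ → V`, an `n`-cochain being a function that only depends on the first
`n + 1` entries (the predicate `IsCochain n`). -/

namespace SimplicialCochain

variable {V R : Type*} [CommRing R]

/-- **Mod-4 additivity of the Steenrod square**: let `c` and `c'` be
`ℤ`-valued 2-cochains such that every value of `dc` is even.  Then every value
of the 4-cochain `Sq²(c + 2c') − Sq²(c) − 2·d(c∪₁c')` is divisible by 4. -/
theorem sq2_add_two_smul_mod_four (c c' : (ℕ → V) → ℤ)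
    (hc : IsCochain 2 c) (hc' : IsCochain 2 c')
    (hdc : ∀ σ : ℕ → V, (2 : ℤ) ∣ delta 2 c σ) :
    ∀ σ : ℕ → V,
      (4 : ℤ) ∣ (sq2 (c + (2 : ℤ) • c') - sq2 c
        - (2 : ℤ) • delta 3 (cup1 2 2 c c')) σ := by
  intro σ
  set F : V → V → V → ℤ := fun a b d => c (fun l => if l = 0 then a else if l = 1 then b else d) with hF
  set G : V → V → V → ℤ := fun a b d => c' (fun l => if l = 0 then a else if l = 1 then b else d) with hG
  have hcF : ∀ τ : ℕ → V, c τ = F (τ 0) (τ 1) (τ 2) := by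
    intro τ
    rw [hF]
    exact hc τ _ (by intro i hi; interval_cases i <;> simp)
  have hcG : ∀ τ : ℕ → V, c' τ = G (τ 0) (τ 1) (τ 2) := by
    intro τ
    rw [hG]
    exact hc' τ _ (by intro i hi; interval_cases i <;> simp)
  have hD : ∀ a b e d : ℕ, ∃ k : ℤ,
      F (σ b) (σ e) (σ d) - F (σ a) (σ e) (σ d) + F (σ a) (σ b) (σ d) - F (σ a) (σ b) (σ e)
        = 2 * k := by
    intro a b e d
    obtain ⟨k, hk⟩ :=
      hdc (fun j => if j = 0 then σ a else if j = 1 then σ b else if j = 2 then σ e else σ d)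
    refine ⟨k, ?_⟩
    rw [← hk]
    simp only [delta, Finset.sum_range_succ, Finset.sum_range_zero, hcF]
    norm_num
    ring
  obtain ⟨k4, hk4⟩ := hD 0 1 2 3
  obtain ⟨k3, hk3⟩ := hD 0 1 2 4
  obtain ⟨k2, hk2⟩ := hD 0 1 3 4
  obtain ⟨k1, hk1⟩ := hD 0 2 3 4
  have e4 : F (σ 1) (σ 2) (σ 3)
      = F (σ 0) (σ 2) (σ 3) - F (σ 0) (σ 1) (σ 3) + F (σ 0) (σ 1) (σ 2) + 2 * k4 := by
    linarith
  have e3 : F (σ 1) (σ 2) (σ 4)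
      = F (σ 0) (σ 2) (σ 4) - F (σ 0) (σ 1) (σ 4) + F (σ 0) (σ 1) (σ 2) + 2 * k3 := by
    linarith
  have e2 : F (σ 1) (σ 3) (σ 4)
      = F (σ 0) (σ 3) (σ 4) - F (σ 0) (σ 1) (σ 4) + F (σ 0) (σ 1) (σ 3) + 2 * k2 := by
    linarith
  have e1 : F (σ 2) (σ 3) (σ 4)
      = F (σ 0) (σ 3) (σ 4) - F (σ 0) (σ 2) (σ 4) + F (σ 0) (σ 2) (σ 3) + 2 * k1 := by
    linarith
  simp only [sq2, cup, cup1, delta, Pi.add_apply, Pi.sub_apply, Pi.smul_apply, smul_eq_mul,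
    Finset.sum_range_succ, Finset.sum_range_zero]
  simp only [hcF, hcG]
  norm_num
  rw [e4, e3, e2, e1]
  exact ⟨(1) * (F (σ 0) (σ 1) (σ 2)) * (G (σ 2) (σ 3) (σ 4)) + (-1) * (G (σ 0) (σ 1) (σ 2)) * (G (σ 0) (σ 3) (σ 4)) + (1) * (G (σ 0) (σ 1) (σ 2)) * (G (σ 2) (σ 3) (σ 4)) + (1) * (G (σ 0) (σ 1) (σ 2)) * (k1) + (1) * (G (σ 0) (σ 1) (σ 3)) * (G (σ 0) (σ 3) (σ 4)) + (-1) * (G (σ 0) (σ 1) (σ 4)) * (G (σ 1) (σ 2) (σ 3)) + (1) * (G (σ 0) (σ 1) (σ 4)) * (G (σ 1) (σ 2) (σ 4)) + (-1) * (G (σ 0) (σ 1) (σ 4)) * (G (σ 1) (σ 3) (σ 4)) + (1) * (G (σ 0) (σ 1) (σ 4)) * (G (σ 2) (σ 3) (σ 4)) + (1) * (G (σ 0) (σ 1) (σ 4)) * (k1) + (-1) * (G (σ 0) (σ 1) (σ 4)) * (k2) + (1) * (G (σ 0) (σ 1) (σ 4)) * (k3) + (-1) * (G (σ 0) (σ 1)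 (σ 4)) * (k4) + (-1) * (G (σ 0) (σ 2) (σ 3)) * (G (σ 0) (σ 3) (σ 4)) + (1) * (G (σ 0) (σ 3) (σ 4)) * (G (σ 1) (σ 2) (σ 3)) + (1) * (G (σ 0) (σ 3) (σ 4)) * (k4) + (-1) * (G (σ 1) (σ 2) (σ 3)) * (k2) + (1) * (G (σ 2) (σ 3) (σ 4)) * (k3), by ring⟩

end SimplicialCochain
end

section
/- Additivity of the Steenrod square with a cocycle, up to an explicit even term and coboundary: let c and c' be 2-cochains with values in a commutative ring R, and suppose dc' = 0. Then Sq²(c + c') = Sq²(c) + Sq²(c') + 2·(c'∪c) + d(c'∪₁c). -/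
/-! Simplicial cochains on the full simplicial set over a vertex type `V`,
with values in a commutative ring `R`.  An `n`-cochain is a function of the
ordered tuple of vertices `(v₀, …, vₙ)`; we model vertex tuples as functions
`ℕ → V`, an `n`-cochain being a function that only depends on the first
`n + 1` entries (the predicate `IsCochain n`). -/

namespace SimplicialCochain

variable {V R : Type*} [CommRing R]

/-- **Additivity of the Steenrod square with a cocycle, up to an explicit even
term and coboundary**: if `c`, `c'` are 2-cochains and `dc' = 0`, then
`Sq²(c + c') = Sq²(c) + Sq²(c') + 2·(c'∪c) + d(c'∪₁c)`. -/
theorem sq2_add_cocycle (c c' : (ℕ → V) → R)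
    (hc : IsCochain 2 c) (hc' : IsCochain 2 c') (hc'coc : delta 2 c' = 0) :
    sq2 (c + c') =
      sq2 c + sq2 c' + (2 : R) • cup 2 c' c + delta 3 (cup1 2 2 c' c) := by
  obtain ⟨C, hC⟩ : ∃ C : V → V → V → R, ∀ τ : ℕ → V, c τ = C (τ 0) (τ 1) (τ 2) :=
    ⟨fun x y z => c (fun j => if j = 0 then x else if j = 1 then y else z),
     fun τ => hc τ _ (by intro i hi; interval_cases i <;> simp)⟩
  obtain ⟨D, hD⟩ : ∃ D : V → V → V → R, ∀ τ : ℕ → V, c' τ = D (τ 0) (τ 1) (τ 2) :=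
    ⟨fun x y z => c' (fun j => if j = 0 then x else if j = 1 then y else z),
     fun τ => hc' τ _ (by intro i hi; interval_cases i <;> simp)⟩
  have hcoc : ∀ x y z w : V, D y z w - D x z w + D x y w - D x y z = 0 := by
    intro x y z w
    have h := congrFun hc'coc
      (fun j => if j = 0 then x else if j = 1 then y else if j = 2 then z else w)
    simp only [delta, Pi.zero_apply] at h
    rw [Finset.sum_range_succ, Finset.sum_range_succ, Finset.sum_range_succ,
      Finset.sum_range_succ, Finset.sum_range_zero] at h
    simp only [hD] at h
    norm_num at h
    linear_combination h
  funext σ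
  simp only [sq2, cup, cup1, delta, Pi.add_apply, Pi.smul_apply, smul_eq_mul]
  norm_num [Finset.sum_range_succ, hC, hD]
  linear_combination (C (σ 0) (σ 1) (σ 2)) * hcoc (σ 0) (σ 2) (σ 3) (σ 4) +
    (C (σ 2) (σ 3) (σ 4)) * hcoc (σ 0) (σ 1) (σ 2) (σ 4) +
    (C (σ 0) (σ 3) (σ 4)) * hcoc (σ 0) (σ 1) (σ 2) (σ 3) -
    (C (σ 1) (σ 2) (σ 3)) * hcoc (σ 0) (σ 1) (σ 3) (σ 4) +
    (C (σ 0) (σ 1) (σ 4)) * hcoc (σ 1) (σ 2) (σ 3) (σ 4)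

end SimplicialCochain
end

section
/- For every positive integer n and every integer m, the sum over the six variables α₁₂, α₁₃, α₁₄, α₂₃, α₂₄, α₃₄, each ranging over {0,1,…,n−1}, of exp((2πi·m/n)·(α₁₂·α₃₄ − α₁₃·α₂₄ + α₁₄·α₂₃)) equals n³·gcd(m,n)³. (This evaluates the topological partition function of the 3+1D pure 2-gauge theory of 2-gauge-group B(Z_n,2) on the space-time T⁴, giving Z^top(T⁴) = gcd(m,n)³.) -/
open Complex

section AuxPartitionT4
open Finset

lemma sum_exp_root (n : ℕ) (hn : 0 < n) (k : ℤ) :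
    ∑ b ∈ Finset.range n, Complex.exp (2*(Real.pi:ℂ)*I*k*b/n) = if (n:ℤ) ∣ k then (n:ℂ) else 0 := by
  have hn0 : (n:ℂ) ≠ 0 := Nat.cast_ne_zero.2 hn.ne'
  have hterm : ∀ b : ℕ, Complex.exp (2*(Real.pi:ℂ)*I*k*b/n) = Complex.exp (2*(Real.pi:ℂ)*I*k/n) ^ b := by
    intro b
    rw [← Complex.exp_nat_mul]
    congr 1; ring
  simp only [hterm]
  by_cases h : (n:ℤ) ∣ k
  · obtain ⟨c, rfl⟩ := h
    have h1 : Complex.exp (2*(Real.pi:ℂ)*I*((n*c:ℤ):ℂ)/n) = 1 := by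
      rw [show (2*(Real.pi:ℂ)*I*((n*c:ℤ):ℂ)/n) = c * (2*(Real.pi:ℂ)*I) by push_cast; field_simp]
      exact Complex.exp_int_mul_two_pi_mul_I c
    push_cast at h1 ⊢
    simp [h1, if_pos (dvd_mul_right (n:ℤ) c)]
  · have hne : Complex.exp (2*(Real.pi:ℂ)*I*k/n) ≠ 1 := by
      intro h1
      rw [Complex.exp_eq_one_iff] at h1
      obtain ⟨j, hj⟩ := h1
      apply h
      refine ⟨j, ?_⟩
      have h2 : (2*(Real.pi:ℂ)*I : ℂ) ≠ 0 := by
        simp [Real.pi_ne_zero, Complex.I_ne_zero]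
      have : (k:ℂ) = n*j := by
        field_simp at hj
        have h3 : (2*(Real.pi:ℂ)*I) * (k:ℂ) = (2*(Real.pi:ℂ)*I) * ((n:ℂ)*j) := by linear_combination (2*(Real.pi:ℂ)*I) * hj
        exact mul_left_cancel₀ h2 h3
      exact_mod_cast this
    rw [geom_sum_eq hne]
    have hpow : Complex.exp (2*(Real.pi:ℂ)*I*k/n) ^ n = 1 := by
      rw [← Complex.exp_nat_mul, show (n:ℂ)*(2*(Real.pi:ℂ)*I*k/n) = k*(2*(Real.pi:ℂ)*I) by field_simp]
      exact Complex.exp_int_mul_two_pi_mul_I k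
    rw [hpow]
    simp [h]

lemma card_dvd_filter (g d : ℕ) (hd : 0 < d) :
    ((Finset.range (g*d)).filter (fun a => d ∣ a)).card = g := by
  have : (Finset.range (g*d)).filter (fun a => d ∣ a) = (Finset.range g).image (· * d) := by
    ext a
    simp only [mem_filter, mem_range, mem_image]
    constructor
    · rintro ⟨hlt, k, rfl⟩
      exact ⟨k, by rw [mul_comm] at hlt; exact lt_of_mul_lt_mul_right hlt (le_of_lt hd),
        (mul_comm d k).symm ▸ rfl⟩
    · rintro ⟨k, hk, rfl⟩
      exact ⟨(Nat.mul_lt_mul_right hd).2 hk, dvd_mul_left d k⟩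
  rw [this, Finset.card_image_of_injective _ (fun x y h => Nat.eq_of_mul_eq_mul_right hd h),
    Finset.card_range]

lemma dvd_iff_div_gcd (n : ℕ) (hn : 0 < n) (M : ℤ) (a : ℕ) :
    (n:ℤ) ∣ M * a ↔ (n / Int.gcd M n : ℕ) ∣ a := by
  set g : ℕ := Int.gcd M n with hg
  have hg0 : 0 < g := Int.gcd_pos_of_ne_zero_right M (by exact_mod_cast hn.ne')
  have hgz : (g:ℤ) ≠ 0 := by exact_mod_cast hg0.ne'
  have hgn : (g:ℤ) ∣ (n:ℤ) := Int.gcd_dvd_right M n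
  have hgM : (g:ℤ) ∣ M := Int.gcd_dvd_left M n
  have hgn' : g ∣ n := by exact_mod_cast hgn
  obtain ⟨d, hd⟩ := hgn'
  obtain ⟨s, hs⟩ := hgM
  have hdiv : n / g = d := by rw [hd, Nat.mul_div_cancel_left _ hg0]
  have hcop : Int.gcd s d = 1 := by
    have h1 : M / (g:ℤ) = s := by rw [hs, Int.mul_ediv_cancel_left _ hgz]
    have h2 : (n:ℤ) / (g:ℤ) = d := by
      rw [hd]; push_cast; rw [Int.mul_ediv_cancel_left _ hgz]
    have := Int.gcd_div_gcd_div_gcd (i := M) (j := (n:ℤ)) (by exact_mod_cast hg0)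
    rwa [h1, ← hg, h2] at this
  have hcop' : IsCoprime (d:ℤ) s := by
    rw [Int.isCoprime_iff_gcd_eq_one, Int.gcd_comm]; exact_mod_cast hcop
  rw [hdiv]
  constructor
  · intro h
    have h' : (d:ℤ) ∣ s * a := by
      have : ((g:ℤ) * d) ∣ (g:ℤ) * (s * a) := by
        rw [← mul_assoc, ← hs]
        have : ((n:ℕ):ℤ) = (g:ℤ) * d := by rw [hd]; push_cast; ring
        rwa [← this]
      exact (mul_dvd_mul_iff_left hgz).1 this
    have := hcop'.dvd_of_dvd_mul_left h'
    exact_mod_cast this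
  · intro h
    obtain ⟨t, rfl⟩ := h
    refine ⟨s * t, ?_⟩
    rw [hs, hd]; push_cast; ring

lemma pair_sum (n : ℕ) (hn : 0 < n) (M : ℤ) :
    ∑ a ∈ Finset.range n, ∑ b ∈ Finset.range n,
      Complex.exp (2*(Real.pi:ℂ)*I*(M*a)*b/n) = (n:ℂ) * (Int.gcd M n : ℂ) := by
  set g : ℕ := Int.gcd M n with hg
  have hg0 : 0 < g := Int.gcd_pos_of_ne_zero_right M (by exact_mod_cast hn.ne')
  have hgn : g ∣ n := by exact_mod_cast (Int.gcd_dvd_right (a := M) (b := (n:ℤ)))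
  have hd0 : 0 < n / g := Nat.div_pos (Nat.le_of_dvd hn hgn) hg0
  have hstep : ∀ a ∈ Finset.range n, (∑ b ∈ Finset.range n,
      Complex.exp (2*(Real.pi:ℂ)*I*(M*a)*b/n)) = if (n / g : ℕ) ∣ a then (n:ℂ) else 0 := by
    intro a _
    rw [show (fun b : ℕ => Complex.exp (2*(Real.pi:ℂ)*I*(M*a)*b/n)) = fun b : ℕ =>
      Complex.exp (2*(Real.pi:ℂ)*I*((M*a:ℤ):ℂ)*b/n) from by push_cast; rfl]
    rw [sum_exp_root n hn (M*a)]
    simp only [dvd_iff_div_gcd n hn M a]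
    rfl
  rw [Finset.sum_congr rfl hstep, ← Finset.sum_filter, Finset.sum_const]
  have hn' : n = g * (n / g) := (Nat.mul_div_cancel' hgn).symm
  rw [show (Finset.range n) = Finset.range (g * (n / g)) from by rw [← hn']]
  rw [card_dvd_filter g (n/g) hd0, nsmul_eq_mul]
  ring

end AuxPartitionT4


/-- For every positive integer `n` and every integer `m`, the sum over the six
variables `α₁₂, α₁₃, α₁₄, α₂₃, α₂₄, α₃₄`, each ranging over `{0,1,…,n−1}`, of
`exp((2πi·m/n)·(α₁₂·α₃₄ − α₁₃·α₂₄ + α₁₄·α₂₃))` equals `n³·gcd(m,n)³`.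
(This evaluates the topological partition function of the 3+1D pure 2-gauge
theory of 2-gauge-group `B(Z_n,2)` on the space-time `T⁴`, giving
`Z^top(T⁴) = gcd(m,n)³`.) -/
theorem partition_function_T4 (n : ℕ) (hn : 0 < n) (m : ℤ) :
    ∑ a12 ∈ Finset.range n, ∑ a13 ∈ Finset.range n, ∑ a14 ∈ Finset.range n,
      ∑ a23 ∈ Finset.range n, ∑ a24 ∈ Finset.range n, ∑ a34 ∈ Finset.range n,
        Complex.exp (2 * (Real.pi : ℂ) * Complex.I * (m : ℂ) / (n : ℂ) *
          ((a12 : ℂ) * (a34 : ℂ) - (a13 : ℂ) * (a24 : ℂ) + (a14 : ℂ) * (a23 : ℂ)))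
      = (n : ℂ) ^ 3 * (Int.gcd m n : ℂ) ^ 3 := by
  have hn0 : (n:ℂ) ≠ 0 := Nat.cast_ne_zero.2 hn.ne'
  have hsplit : ∀ a b c d e f : ℕ,
      Complex.exp (2 * (Real.pi : ℂ) * Complex.I * (m : ℂ) / (n : ℂ) *
        ((a : ℂ) * (b : ℂ) - (c : ℂ) * (d : ℂ) + (e : ℂ) * (f : ℂ)))
      = Complex.exp (2*(Real.pi:ℂ)*I*(m*a)*b/n) *
        Complex.exp (2*(Real.pi:ℂ)*I*((-m)*c)*d/n) *
        Complex.exp (2*(Real.pi:ℂ)*I*(m*e)*f/n) := by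
    intro a b c d e f
    rw [← Complex.exp_add, ← Complex.exp_add]
    congr 1
    field_simp
    ring
  simp only [hsplit]
  simp only [← Finset.sum_mul, ← Finset.mul_sum]
  have hneg := pair_sum n hn (-m)
  push_cast at hneg
  rw [pair_sum n hn m, hneg, Int.neg_gcd]
  ring
end

section
/- Let n be an even positive integer, let m be a natural number, and set g = gcd(m,n). Then Σ_{a=0}^{n−1} Σ_{b=0}^{n−1} exp(πi·m·(a² − b²)/n) equals n·g if m·n/g² is even, and equals 0 if m·n/g² is odd. (This evaluates the topological partition function of the 3+1D pure 2-gauge theory of 2-gauge-group B(Z_n,2) with action (m/2n)·Sq²b on the non-spin space-time F⁴ = (S¹×S³)#(S¹×S³)#ℂP²#(conjugate ℂP²).) -/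
open Complex

variable (n m : ℕ)

noncomputable def ee (x : ℤ) : ℂ := Complex.exp ((Real.pi : ℂ) * Complex.I * m * x / n)

lemma ee_add (x y : ℤ) : ee n m (x + y) = ee n m x * ee n m y := by
  by_cases hn : (n : ℂ) = 0
  · simp [ee, hn]
  rw [ee, ee, ee, ← Complex.exp_add]
  congr 1
  field_simp
  push_cast; ring

lemma ee_eq_of (hn : 0 < n) {x y : ℤ} (h : (2 * n : ℤ) ∣ x - y) : ee n m x = ee n m y := by
  obtain ⟨k, hk⟩ := h
  have hn' : (n : ℂ) ≠ 0 := Nat.cast_ne_zero.mpr hn.ne'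
  have h1 : ee n m (2 * n * k) = 1 := by
    rw [ee]
    have : (Real.pi : ℂ) * Complex.I * m * ((2 * n * k : ℤ) : ℂ) / n
        = ((m * k : ℤ) : ℂ) * (2 * Real.pi * Complex.I) := by
      push_cast; field_simp
    rw [this, Complex.exp_int_mul_two_pi_mul_I]
  have hx : x = y + 2 * n * k := by linarith
  rw [hx, ee_add, h1, mul_one]

lemma ee_pow (x : ℤ) (k : ℕ) : ee n m (x * k) = (ee n m x) ^ k := by
  rw [ee, ee, ← Complex.exp_nat_mul]
  congr 1
  push_cast; ring

lemma zmod_sum [NeZero n] (f : ℕ → ℂ) :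
    ∑ a : ZMod n, f (a.val) = ∑ a ∈ Finset.range n, f a := by
  refine Finset.sum_nbij' (fun a => a.val) (fun a => (a : ZMod n)) ?_ ?_ ?_ ?_ ?_
  all_goals intro a ha
  · exact Finset.mem_range.mpr (ZMod.val_lt a)
  · exact Finset.mem_univ _
  · exact ZMod.natCast_rightInverse a
  · exact ZMod.val_cast_of_lt (Finset.mem_range.mp ha)
  · rfl

lemma geom_aux (ζ : ℂ) (h : ζ ^ n = 1) :
    ∑ b ∈ Finset.range n, ζ ^ b = if ζ = 1 then (n : ℂ) else 0 := by
  split_ifs with h1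
  · simp [h1]
  · rw [geom_sum_eq h1, h]; simp

lemma root_one (hn : 0 < n) (a : ℕ) : ee n m (2 * a) = 1 ↔ n ∣ m * a := by
  have hπ : (Real.pi : ℂ) ≠ 0 := Complex.ofReal_ne_zero.mpr Real.pi_ne_zero
  have hn' : (n : ℂ) ≠ 0 := Nat.cast_ne_zero.mpr hn.ne'
  have h2πI : (2 * Real.pi * Complex.I : ℂ) ≠ 0 := by
    simp [hπ, Complex.I_ne_zero]
  rw [ee, Complex.exp_eq_one_iff]
  constructor
  · rintro ⟨k, hk⟩
    field_simp at hk
    have h2 : (2 * Real.pi * Complex.I : ℂ) * ((m * a : ℕ) : ℂ)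
        = (2 * Real.pi * Complex.I : ℂ) * ((k : ℂ) * n) := by
      push_cast at hk ⊢; linear_combination (Real.pi * Complex.I) * hk
    have h3 : ((m * a : ℕ) : ℤ) = k * n := by exact_mod_cast mul_left_cancel₀ h2πI h2
    exact Int.natCast_dvd_natCast.mp ⟨k, by linear_combination h3⟩
  · rintro ⟨k, hk⟩
    refine ⟨k, ?_⟩
    have hk' : ((m * a : ℕ) : ℂ) = (n : ℂ) * k := by exact_mod_cast congrArg (Nat.cast : ℕ → ℂ) hk
    push_cast at hk' ⊢
    field_simp
    linear_combination hk'

lemma sq_period (hne : Even n) {u v : ℤ} (h : (n : ℤ) ∣ u - v) :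
    (2 * n : ℤ) ∣ u ^ 2 - v ^ 2 := by
  obtain ⟨w, hw⟩ := hne
  obtain ⟨k, hk⟩ := h
  have hn2 : (n : ℤ) = 2 * w := by exact_mod_cast hw.trans (two_mul w).symm
  have hu : u = v + n * k := by linarith
  exact ⟨w * k ^ 2 + v * k, by subst hu; linear_combination ((n : ℤ) * k ^ 2) * hn2⟩

lemma main_eval (hn : 0 < n) (hne : Even n) :
    ∑ a ∈ Finset.range n, ∑ b ∈ Finset.range n,
        Complex.exp ((Real.pi : ℂ) * Complex.I * (m : ℂ) *
          ((a : ℂ) ^ 2 - (b : ℂ) ^ 2) / (n : ℂ))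
      = (n : ℂ) * ∑ k ∈ Finset.range (Nat.gcd m n),
          (-1 : ℂ) ^ (m * n / Nat.gcd m n ^ 2 * k ^ 2) := by
  haveI : NeZero n := ⟨hn.ne'⟩
  set g := Nat.gcd m n with hg
  set t := m * n / g ^ 2 with ht
  set n' := n / g with hn'def
  have hgpos : 0 < g := Nat.gcd_pos_of_pos_right m hn
  have hgn : g * n' = n := Nat.mul_div_cancel' (Nat.gcd_dvd_right m n)
  have hn'pos : 0 < n' := by
    rcases Nat.eq_zero_or_pos n' with h | h
    · rw [h] at hgn; simp at hgn; omega
    · exact h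
  set m' := m / g with hm'def
  have hm : g * m' = m := Nat.mul_div_cancel' (Nat.gcd_dvd_left m n)
  have hcop : Nat.Coprime m' n' := Nat.coprime_div_gcd_div_gcd hgpos
  have hdvd : ∀ a : ℕ, n ∣ m * a ↔ n' ∣ a := by
    intro a
    constructor
    · intro h
      have h1 : g * n' ∣ g * (m' * a) := by
        rw [hgn, ← mul_assoc, hm]; exact h
      have h2 : n' ∣ m' * a := (mul_dvd_mul_iff_left hgpos.ne').mp h1
      exact (hcop.symm : Nat.Coprime n' m').dvd_of_dvd_mul_left h2
    · rintro ⟨c, hc⟩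
      exact ⟨m' * c, by rw [hc, ← hm, ← hgn]; ring⟩
  have ht' : t = m' * n' := by
    have h1 : m * n = g ^ 2 * (m' * n') := by rw [← hm, ← hgn]; ring
    rw [ht, h1, Nat.mul_div_cancel_left _ (by positivity)]
  have hmn2 : m * n' ^ 2 = t * n := by rw [ht', ← hgn]; nth_rewrite 1 [← hm]; ring
  have hterm : ∀ a b : ℕ,
      Complex.exp ((Real.pi : ℂ) * Complex.I * (m : ℂ) * ((a : ℂ) ^ 2 - (b : ℂ) ^ 2) / n)
        = ee n m ((a : ℤ) ^ 2 - (b : ℤ) ^ 2) := by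
    intro a b; rw [ee]; congr 1; push_cast; ring
  calc ∑ a ∈ Finset.range n, ∑ b ∈ Finset.range n,
        Complex.exp ((Real.pi : ℂ) * Complex.I * (m : ℂ) *
          ((a : ℂ) ^ 2 - (b : ℂ) ^ 2) / (n : ℂ))
      = ∑ a ∈ Finset.range n, ∑ b ∈ Finset.range n, ee n m ((a : ℤ) ^ 2 - (b : ℤ) ^ 2) := by
        exact Finset.sum_congr rfl fun a _ => Finset.sum_congr rfl fun b _ => hterm a b
    _ = ∑ b ∈ Finset.range n, ∑ a ∈ Finset.range n, ee n m ((a : ℤ) ^ 2 - (b : ℤ) ^ 2) :=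
        Finset.sum_comm
    _ = ∑ b : ZMod n, ∑ a ∈ Finset.range n, ee n m ((a : ℤ) ^ 2 - ((b.val : ℕ) : ℤ) ^ 2) :=
        (zmod_sum n (fun b => ∑ a ∈ Finset.range n, ee n m ((a : ℤ) ^ 2 - (b : ℤ) ^ 2))).symm
    _ = ∑ b : ZMod n, ∑ a : ZMod n, ee n m (((a.val : ℕ) : ℤ) ^ 2 - ((b.val : ℕ) : ℤ) ^ 2) := by
        exact Finset.sum_congr rfl fun b _ => (zmod_sum n _).symm
    _ = ∑ b : ZMod n, ∑ a : ZMod n, ee n m ((((a + b).val : ℕ) : ℤ) ^ 2 - ((b.val : ℕ) : ℤ) ^ 2) := by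
        refine Finset.sum_congr rfl fun b _ => ?_
        exact (Equiv.sum_comp (Equiv.addRight b)
          (fun a => ee n m (((a.val : ℕ) : ℤ) ^ 2 - ((b.val : ℕ) : ℤ) ^ 2))).symm
    _ = ∑ b : ZMod n, ∑ a : ZMod n,
          ee n m ((a.val : ℤ) ^ 2) * (ee n m (2 * a.val)) ^ (b.val) := by
        refine Finset.sum_congr rfl fun b _ => Finset.sum_congr rfl fun a _ => ?_
        have hmod : (a + b).val ≡ a.val + b.val [MOD n] := by
          rw [ZMod.val_add]; exact (Nat.mod_modEq _ _)
        have hdvd1 : (n : ℤ) ∣ (((a + b).val : ℤ) - ((a.val + b.val : ℕ) : ℤ)) := by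
          exact dvd_sub_comm.mp (Nat.ModEq.dvd hmod)
        have h1 : ee n m ((((a + b).val : ℕ) : ℤ) ^ 2 - ((b.val : ℕ) : ℤ) ^ 2)
            = ee n m (((a.val + b.val : ℕ) : ℤ) ^ 2 - ((b.val : ℕ) : ℤ) ^ 2) := by
          apply ee_eq_of n m hn
          have h2 := sq_period n hne hdvd1
          have h3 : ((((a + b).val : ℕ) : ℤ) ^ 2 - ((b.val : ℕ) : ℤ) ^ 2)
              - (((a.val + b.val : ℕ) : ℤ) ^ 2 - ((b.val : ℕ) : ℤ) ^ 2)
              = (((a + b).val : ℕ) : ℤ) ^ 2 - ((a.val + b.val : ℕ) : ℤ) ^ 2 := by ring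
          rw [h3]; exact h2
        rw [h1]
        have h2 : ((a.val + b.val : ℕ) : ℤ) ^ 2 - ((b.val : ℕ) : ℤ) ^ 2
            = (a.val : ℤ) ^ 2 + (2 * (a.val : ℤ)) * ((b.val : ℕ) : ℤ) := by push_cast; ring
        rw [h2, ee_add, ee_pow]
    _ = ∑ a : ZMod n, ∑ b : ZMod n,
          ee n m ((a.val : ℤ) ^ 2) * (ee n m (2 * a.val)) ^ (b.val) := Finset.sum_comm
    _ = ∑ a : ZMod n, ee n m ((a.val : ℤ) ^ 2) * (if n ∣ m * a.val then (n : ℂ) else 0) := by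
        refine Finset.sum_congr rfl fun a _ => ?_
        rw [← Finset.mul_sum]
        congr 1
        have hz : (ee n m (2 * a.val)) ^ n = 1 := by
          rw [← ee_pow]
          have h0 : ee n m ((2 * (a.val : ℤ)) * (n : ℕ)) = ee n m 0 := by
            apply ee_eq_of n m hn
            exact ⟨(a.val : ℤ), by push_cast; ring⟩
          rw [h0]; simp [ee]
        calc ∑ b : ZMod n, (ee n m (2 * a.val)) ^ (b.val)
            = ∑ b ∈ Finset.range n, (ee n m (2 * a.val)) ^ b :=
              zmod_sum n (fun b => (ee n m (2 * a.val)) ^ b)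
          _ = if ee n m (2 * a.val) = 1 then (n : ℂ) else 0 := geom_aux n (ee n m (2 * a.val)) hz
          _ = if n ∣ m * a.val then (n : ℂ) else 0 := if_congr (root_one n m hn a.val) rfl rfl
    _ = ∑ a ∈ Finset.range n, ee n m ((a : ℤ) ^ 2) * (if n ∣ m * a then (n : ℂ) else 0) :=
        zmod_sum n (fun a => ee n m ((a : ℤ) ^ 2) * (if n ∣ m * a then (n : ℂ) else 0))
    _ = (n : ℂ) * ∑ a ∈ (Finset.range n).filter (fun a => n ∣ m * a), ee n m ((a : ℤ) ^ 2) := by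
        rw [Finset.mul_sum, Finset.sum_filter]
        refine Finset.sum_congr rfl fun a _ => ?_
        split_ifs <;> ring
    _ = (n : ℂ) * ∑ k ∈ Finset.range g, (-1 : ℂ) ^ (t * k ^ 2) := by
        congr 1
        refine Finset.sum_nbij' (fun a => a / n') (fun k => k * n') ?_ ?_ ?_ ?_ ?_
        · intro a ha
          rw [Finset.mem_filter, Finset.mem_range] at ha
          rw [Finset.mem_range]
          have hd := (hdvd a).mp ha.2
          exact (Nat.div_lt_iff_lt_mul hn'pos).mpr (by omega)
        · intro k hk
          rw [Finset.mem_range] at hk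
          rw [Finset.mem_filter, Finset.mem_range]
          constructor
          · calc k * n' < g * n' := (Nat.mul_lt_mul_right hn'pos).mpr hk
              _ = n := hgn
          · exact (hdvd _).mpr ⟨k, mul_comm k n'⟩
        · intro a ha
          rw [Finset.mem_filter] at ha
          exact Nat.div_mul_cancel ((hdvd a).mp ha.2)
        · intro k _
          exact Nat.mul_div_cancel k hn'pos
        · intro a ha
          rw [Finset.mem_filter, Finset.mem_range] at ha
          have hd := (hdvd a).mp ha.2
          have hka : a = a / n' * n' := (Nat.div_mul_cancel hd).symm
          set k := a / n' with hkdef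
          have hc : (m : ℂ) * (n' : ℂ) ^ 2 = (t : ℂ) * n := by exact_mod_cast congrArg (Nat.cast : ℕ → ℂ) hmn2
          have hac : (a : ℂ) = (k : ℂ) * n' := by exact_mod_cast congrArg (Nat.cast : ℕ → ℂ) hka
          have hnne : (n : ℂ) ≠ 0 := Nat.cast_ne_zero.mpr hn.ne'
          have harg : (Real.pi : ℂ) * Complex.I * m * (((a : ℤ) ^ 2 : ℤ) : ℂ) / n
              = ((t * k ^ 2 : ℕ) : ℂ) * ((Real.pi : ℂ) * Complex.I) := by
            push_cast
            rw [hac]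
            field_simp
            linear_combination ((k : ℂ) ^ 2) * hc
          rw [ee, harg, Complex.exp_nat_mul, Complex.exp_pi_mul_I]


/-- Let `n` be an even positive integer, `m` a natural number, and
`g = gcd(m,n)`.  Then `∑_{a=0}^{n−1} ∑_{b=0}^{n−1} exp(πi·m·(a² − b²)/n)`
equals `n·g` if `m·n/g²` is even, and equals `0` if `m·n/g²` is odd.
(This evaluates the topological partition function of the 3+1D pure 2-gauge
theory of 2-gauge-group `B(Z_n,2)` with action `(m/2n)·Sq²b` on the non-spin
space-time `F⁴ = (S¹×S³)#(S¹×S³)#ℂP²#(conjugate ℂP²)`.) -/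
theorem partition_function_F4_even (n : ℕ) (hn : 0 < n) (hne : Even n) (m : ℕ) :
    (Even (m * n / Nat.gcd m n ^ 2) →
      ∑ a ∈ Finset.range n, ∑ b ∈ Finset.range n,
        Complex.exp ((Real.pi : ℂ) * Complex.I * (m : ℂ) *
          ((a : ℂ) ^ 2 - (b : ℂ) ^ 2) / (n : ℂ))
        = (n : ℂ) * (Nat.gcd m n : ℂ))
    ∧ (Odd (m * n / Nat.gcd m n ^ 2) →
      ∑ a ∈ Finset.range n, ∑ b ∈ Finset.range n,
        Complex.exp ((Real.pi : ℂ) * Complex.I * (m : ℂ) *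
          ((a : ℂ) ^ 2 - (b : ℂ) ^ 2) / (n : ℂ))
        = 0) := by
  set g := Nat.gcd m n with hg
  set t := m * n / g ^ 2 with ht
  constructor
  · intro hev
    rw [main_eval n m hn hne]
    have h1 : ∀ k ∈ Finset.range g, (-1 : ℂ) ^ (t * k ^ 2) = 1 :=
      fun k _ => Even.neg_one_pow (hev.mul_right _)
    rw [Finset.sum_congr rfl h1, Finset.sum_const, Finset.card_range]
    simp
  · intro hodd
    rw [main_eval n m hn hne]
    have h1 : ∀ k ∈ Finset.range g, (-1 : ℂ) ^ (t * k ^ 2) = (-1 : ℂ) ^ k := by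
      intro k _
      rcases Nat.even_or_odd k with hk | hk
      · have hk2 : Even (k ^ 2) := by rw [pow_two]; exact hk.mul_left k
        rw [Even.neg_one_pow (hk2.mul_left t), Even.neg_one_pow hk]
      · have hk2 : Odd (k ^ 2) := hk.pow
        rw [Odd.neg_one_pow (hodd.mul hk2), Odd.neg_one_pow hk]
    rw [Finset.sum_congr rfl h1, neg_one_geom_sum]
    have hgpos : 0 < g := Nat.gcd_pos_of_pos_right m hn
    have hgn : g * (n / g) = n := Nat.mul_div_cancel' (Nat.gcd_dvd_right m n)
    have hm : g * (m / g) = m := Nat.mul_div_cancel' (Nat.gcd_dvd_left m n)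
    have ht' : t = m / g * (n / g) := by
      have h2 : m * n = g ^ 2 * (m / g * (n / g)) := by
        nth_rewrite 1 [← hm]; nth_rewrite 1 [← hgn]; ring
      rw [ht, h2, Nat.mul_div_cancel_left _ (by positivity)]
    have hn'odd : Odd (n / g) := (Nat.odd_mul.mp (ht' ▸ hodd)).2
    have hgeven : Even g := by
      have h3 : Even (g * (n / g)) := by rw [hgn]; exact hne
      rcases Nat.even_mul.mp h3 with h | h
      · exact h
      · exact absurd h ((Nat.not_even_iff_odd.mpr hn'odd))
    simp [hgeven]
end

section
/- Let n be an odd positive integer and k an integer. Then Σ_{a=0}^{n−1} Σ_{b=0}^{n−1} exp(2πi·k·(a² − b²)/n) = n·gcd(2k,n). (This evaluates the topological partition function of the 3+1D pure 2-gauge theory of 2-gauge-group B(Z_n,2) with action (k/n)·Sq²b on the space-time F⁴ = (S¹×S³)#(S¹×S³)#ℂP²#(conjugate ℂP²), giving Z^top(F⁴) = gcd(2k,n).) -/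
open Complex Finset

noncomputable def cc (n : ℕ) (k : ℤ) (m : ℤ) : ℂ :=
  Complex.exp (2 * (Real.pi : ℂ) * Complex.I * (k : ℂ) * (m : ℂ) / (n : ℂ))

lemma cc_add (n : ℕ) (k m₁ m₂ : ℤ) :
    cc n k (m₁ + m₂) = cc n k m₁ * cc n k m₂ := by
  unfold cc
  rw [← Complex.exp_add]
  congr 1
  push_cast
  ring

lemma cc_pow (n : ℕ) (k m : ℤ) (j : ℕ) : cc n k (m * j) = cc n k m ^ j := by
  unfold cc
  rw [← Complex.exp_nat_mul]
  congr 1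
  push_cast
  ring

lemma cc_congr (n : ℕ) (k m₁ m₂ : ℤ) (h : (m₁ : ZMod n) = (m₂ : ZMod n)) :
    cc n k m₁ = cc n k m₂ := by
  have hdvd : (n : ℤ) ∣ m₁ - m₂ := by
    rw [ZMod.intCast_eq_intCast_iff'] at h
    exact Int.ModEq.dvd (Int.ModEq.symm h)
  obtain ⟨t, ht⟩ := hdvd
  have hm : m₁ = m₂ + n * t := by linarith
  rw [hm, cc_add]
  have : cc n k ((n : ℤ) * t) = 1 := by
    unfold cc
    by_cases hn : (n : ℂ) = 0
    · have hn0 : n = 0 := by exact_mod_cast hn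
      simp [hn0]
    · rw [show 2 * (Real.pi : ℂ) * Complex.I * (k : ℂ) * (((n : ℤ) * t : ℤ) : ℂ) / (n : ℂ)
          = ((k * t : ℤ) : ℂ) * (2 * (Real.pi : ℂ) * Complex.I) by push_cast; field_simp]
      exact Complex.exp_int_mul_two_pi_mul_I (k * t)
  rw [this, mul_one]

lemma cc_eq_one_iff (n : ℕ) (hn : 0 < n) (k m : ℤ) :
    cc n k m = 1 ↔ (n : ℤ) ∣ k * m := by
  have hn' : (n : ℂ) ≠ 0 := Nat.cast_ne_zero.mpr hn.ne'
  have hπ : (2 * (Real.pi : ℂ) * Complex.I) ≠ 0 := by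
    simp [Real.pi_ne_zero, Complex.I_ne_zero]
  unfold cc
  rw [Complex.exp_eq_one_iff]
  constructor
  · rintro ⟨t, ht⟩
    refine ⟨t, ?_⟩
    have h2 : (k : ℂ) * m = (n : ℂ) * t := by
      field_simp at ht
      have := mul_left_cancel₀ hπ (show (2 * (Real.pi : ℂ) * Complex.I) * ((k:ℂ) * m)
        = (2 * (Real.pi : ℂ) * Complex.I) * ((n:ℂ) * t) by linear_combination (2 * (Real.pi : ℂ) * Complex.I) * ht)
      exact this
    exact_mod_cast h2
  · rintro ⟨t, ht⟩
    refine ⟨t, ?_⟩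
    have h2 : (k : ℂ) * m = (n : ℂ) * t := by exact_mod_cast ht
    field_simp
    linear_combination h2

lemma ccInnerSum (n : ℕ) (hn : 0 < n) (k m : ℤ) :
    ∑ j ∈ range n, cc n k (m * j) = if (n : ℤ) ∣ k * m then (n : ℂ) else 0 := by
  have hrw : ∀ j ∈ range n, cc n k (m * j) = cc n k m ^ j := fun j _ => cc_pow n k m j
  rw [Finset.sum_congr rfl hrw]
  by_cases h : cc n k m = 1
  · rw [if_pos ((cc_eq_one_iff n hn k m).mp h)]
    simp [h]
  · rw [if_neg (fun hd => h ((cc_eq_one_iff n hn k m).mpr hd))]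
    rw [geom_sum_eq h]
    have hpow : cc n k m ^ n = 1 := by
      rw [← cc_pow]
      have : cc n k (m * n) = cc n k 0 := by
        apply cc_congr
        push_cast
        simp
      rw [this]
      unfold cc
      simp
    rw [hpow]
    simp

lemma zmodSum (n : ℕ) [NeZero n] (g : ℕ → ℂ) :
    ∑ i ∈ range n, g i = ∑ z : ZMod n, g z.val := by
  refine Finset.sum_nbij' (fun i => (i : ZMod n)) (fun z => z.val) ?_ ?_ ?_ ?_ ?_
  · intro a _; exact Finset.mem_univ _
  · intro z _; exact Finset.mem_range.mpr (ZMod.val_lt z)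
  · intro a ha; exact ZMod.val_cast_of_lt (Finset.mem_range.mp ha)
  · intro z _; exact ZMod.natCast_rightInverse z
  · intro a ha; rw [ZMod.val_cast_of_lt (Finset.mem_range.mp ha)]
lemma countLemma (n : ℕ) (hn : 0 < n) (k : ℤ) :
    ((range n).filter fun m : ℕ => (n : ℤ) ∣ k * (m : ℤ)).card = Int.gcd k n := by
  set d := Int.gcd k n with hd
  have hnz : (n : ℤ) ≠ 0 := by exact_mod_cast hn.ne'
  have hd0 : 0 < d := Int.gcd_pos_of_ne_zero_right k hnz
  have hdn : (d : ℤ) ∣ (n : ℤ) := Int.gcd_dvd_right k n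
  have hdk : (d : ℤ) ∣ k := Int.gcd_dvd_left k n
  have hdvd : d ∣ n := by exact_mod_cast hdn
  set n' := n / d with hn'
  have hnn : n = d * n' := (Nat.mul_div_cancel' hdvd).symm
  have hn'0 : 0 < n' := Nat.div_pos (Nat.le_of_dvd hn hdvd) hd0
  obtain ⟨k', hk'⟩ := hdk
  have hco : Int.gcd ((n' : ℤ)) k' = 1 := by
    have h1 : Int.gcd (k / d) ((n : ℤ) / d) = 1 := Int.gcd_div_gcd_div_gcd hd0
    have h2 : k / (d : ℤ) = k' := by rw [hk']; exact Int.mul_ediv_cancel_left _ (by exact_mod_cast hd0.ne')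
    have h3 : (n : ℤ) / d = (n' : ℤ) := by
      rw [hnn]; push_cast; exact Int.mul_ediv_cancel_left _ (by exact_mod_cast hd0.ne')
    rw [h2, h3] at h1
    rw [Int.gcd_comm]
    exact h1
  have key : ∀ m : ℕ, ((n : ℤ) ∣ k * m ↔ n' ∣ m) := by
    intro m
    constructor
    · intro h
      have h' : ((n' : ℤ)) ∣ k' * m := by
        have hdd : ((d : ℤ)) * n' ∣ (d : ℤ) * (k' * m) := by
          have e1 : ((d:ℤ)) * n' = (n:ℤ) := by rw [hnn]; push_cast; ring
          have e2 : ((d:ℤ)) * (k' * m) = k * m := by rw [hk']; ring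
          rw [e1, e2]; exact h
        exact (mul_dvd_mul_iff_left (show (d:ℤ) ≠ 0 by exact_mod_cast hd0.ne')).mp hdd
      have hcop : IsCoprime ((n' : ℤ)) k' := Int.isCoprime_iff_gcd_eq_one.mpr hco
      have := hcop.dvd_of_dvd_mul_left h'
      exact_mod_cast this
    · rintro ⟨t, rfl⟩
      refine ⟨k' * t, ?_⟩
      rw [hk', hnn]
      push_cast
      ring
  have hfc : ((range n).filter fun m : ℕ => (n : ℤ) ∣ k * (m : ℤ))
      = (range n).filter (fun m => n' ∣ m) := by
    apply Finset.filter_congr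
    intro m _
    simp only [key m]
  rw [hfc]
  have himg : (range n).filter (fun m => n' ∣ m) = (range d).image (fun j => n' * j) := by
    ext m
    simp only [Finset.mem_filter, Finset.mem_range, Finset.mem_image]
    constructor
    · rintro ⟨hm, t, rfl⟩
      refine ⟨t, ?_, rfl⟩
      by_contra hcon
      push_neg at hcon
      have : n ≤ n' * t := by
        calc n = d * n' := hnn
        _ ≤ t * n' := Nat.mul_le_mul_right n' hcon
        _ = n' * t := Nat.mul_comm t n'
      omega
    · rintro ⟨j, hj, rfl⟩
      refine ⟨?_, j, rfl⟩
      calc n' * j < n' * d := (Nat.mul_lt_mul_left hn'0).mpr hj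
      _ = n := by rw [hnn, Nat.mul_comm]
  rw [himg, Finset.card_image_of_injective _ (mul_right_injective₀ hn'0.ne'), Finset.card_range]

lemma gcdOdd (n : ℕ) (hodd : Odd n) (k : ℤ) : Int.gcd (2 * k) n = Int.gcd k n := by
  unfold Int.gcd
  rw [Int.natAbs_mul]
  simp only [Int.natAbs_natCast]
  exact Nat.Coprime.gcd_mul_left_cancel _ (Nat.coprime_two_left.mpr hodd)

/-- Let `n` be an odd positive integer and `k` an integer.  Then
`∑_{a=0}^{n−1} ∑_{b=0}^{n−1} exp(2πi·k·(a² − b²)/n) = n·gcd(2k,n)`.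
(This evaluates the topological partition function of the 3+1D pure 2-gauge
theory of 2-gauge-group `B(Z_n,2)` with action `(k/n)·Sq²b` on the space-time
`F⁴ = (S¹×S³)#(S¹×S³)#ℂP²#(conjugate ℂP²)`, giving `Z^top(F⁴) = gcd(2k,n)`.) -/
theorem partition_function_F4_odd (n : ℕ) (hn : 0 < n) (hodd : Odd n) (k : ℤ) :
    ∑ a ∈ Finset.range n, ∑ b ∈ Finset.range n,
      Complex.exp (2 * (Real.pi : ℂ) * Complex.I * (k : ℂ) *
        ((a : ℂ) ^ 2 - (b : ℂ) ^ 2) / (n : ℂ))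
      = (n : ℂ) * (Int.gcd (2 * k) n : ℂ) := by
  haveI : NeZero n := ⟨hn.ne'⟩
  have hv : ∀ z : ZMod n, ((z.val : ℤ) : ZMod n) = z := fun z => by
    rw [Int.cast_natCast]; exact ZMod.natCast_rightInverse z
  set F : ZMod n → ℂ := fun z => cc n k (z.val : ℤ) with hF
  have hu : IsUnit (2 : ZMod n) := by
    have := (ZMod.isUnit_iff_coprime 2 n).mpr (Nat.coprime_two_left.mpr hodd)
    simpa using this
  obtain ⟨h2, hh2⟩ : ∃ h : ZMod n, 2 * h = 1 := ⟨(2 : ZMod n)⁻¹, ZMod.mul_inv_of_unit _ hu⟩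
  let e2 : (ZMod n × ZMod n) ≃ (ZMod n × ZMod n) :=
    { toFun := fun p => (p.1 + p.2, p.1 - p.2)
      invFun := fun p => ((p.1 + p.2) * h2, (p.1 - p.2) * h2)
      left_inv := by
        intro p
        refine Prod.ext ?_ ?_ <;> simp only
        · linear_combination p.1 * hh2
        · linear_combination p.2 * hh2
      right_inv := by
        intro p
        refine Prod.ext ?_ ?_ <;> simp only
        · linear_combination p.1 * hh2
        · linear_combination p.2 * hh2 }
  have he2 : ∀ p : ZMod n × ZMod n, e2 p = (p.1 + p.2, p.1 - p.2) := fun p => rfl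
  calc
    ∑ a ∈ Finset.range n, ∑ b ∈ Finset.range n,
        Complex.exp (2 * (Real.pi : ℂ) * Complex.I * (k : ℂ) *
          ((a : ℂ) ^ 2 - (b : ℂ) ^ 2) / (n : ℂ))
        = ∑ a ∈ range n, ∑ b ∈ range n, cc n k ((a : ℤ) ^ 2 - (b : ℤ) ^ 2) := by
          refine Finset.sum_congr rfl fun a _ => Finset.sum_congr rfl fun b _ => ?_
          unfold cc
          congr 1
          push_cast
          ring
    _ = ∑ x : ZMod n, ∑ y : ZMod n, cc n k ((x.val : ℤ) ^ 2 - (y.val : ℤ) ^ 2) := by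
          rw [zmodSum n (fun a => ∑ b ∈ range n, cc n k ((a : ℤ) ^ 2 - (b : ℤ) ^ 2))]
          exact Finset.sum_congr rfl fun x _ =>
            zmodSum n (fun b => cc n k ((x.val : ℤ) ^ 2 - (b : ℤ) ^ 2))
    _ = ∑ x : ZMod n, ∑ y : ZMod n, F (x ^ 2 - y ^ 2) := by
          refine Finset.sum_congr rfl fun x _ => Finset.sum_congr rfl fun y _ => ?_
          apply cc_congr
          push_cast [hv]
          ring
    _ = ∑ p : ZMod n × ZMod n, F (p.1 ^ 2 - p.2 ^ 2) := by
          rw [Fintype.sum_prod_type]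
    _ = ∑ p : ZMod n × ZMod n, F (p.1 * p.2) := by
          rw [← Equiv.sum_comp e2 (fun p => F (p.1 * p.2))]
          refine Finset.sum_congr rfl fun p _ => ?_
          rw [he2]
          congr 1
          ring
    _ = ∑ u : ZMod n, ∑ v : ZMod n, F (u * v) := by
          rw [Fintype.sum_prod_type]
    _ = ∑ u : ZMod n, ∑ j ∈ range n, cc n k ((u.val : ℤ) * (j : ℤ)) := by
          refine Finset.sum_congr rfl fun u _ => ?_
          rw [zmodSum n (fun j => cc n k ((u.val : ℤ) * (j : ℤ)))]
          refine Finset.sum_congr rfl fun v _ => ?_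
          apply cc_congr
          push_cast [hv]
          ring
    _ = ∑ u : ZMod n, (if (n : ℤ) ∣ k * (u.val : ℤ) then (n : ℂ) else 0) := by
          exact Finset.sum_congr rfl fun u _ => ccInnerSum n hn k (u.val : ℤ)
    _ = ∑ m ∈ range n, (if (n : ℤ) ∣ k * (m : ℤ) then (n : ℂ) else 0) := by
          rw [zmodSum n (fun m => if (n : ℤ) ∣ k * (m : ℤ) then (n : ℂ) else 0)]
    _ = (((range n).filter fun m : ℕ => (n : ℤ) ∣ k * (m : ℤ)).card : ℂ) * (n : ℂ) := by
          rw [← Finset.sum_filter, Finset.sum_const, nsmul_eq_mul]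
    _ = (n : ℂ) * (Int.gcd (2 * k) n : ℂ) := by
          rw [countLemma n hn k, gcdOdd n hodd k]
          ring
end

section
/- For all positive integers n and p and every integer m, writing g = gcd(n,p), one has Σ_{a=0}^{g−1} Σ_{b=0}^{g−1} exp(2πi·m·a·b/g) = g·gcd(m, gcd(n,p)). (This evaluates the topological partition function of the 3+1D pure 2-gauge theory of 2-gauge-group B(Z_n,2) on the space-time S¹×L³(p), where L³(p) is the 3-dimensional lens space, giving Z^top(S¹×L³(p)) = gcd(m,n,p).) -/
open Complex

lemma count_multiples_aux (d g' : ℕ) (hg' : 0 < g') :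
    (Finset.filter (fun a => g' ∣ a) (Finset.range (d * g'))).card = d := by
  have h : Finset.filter (fun a => g' ∣ a) (Finset.range (d * g')) =
      (Finset.range d).image (fun j => g' * j) := by
    ext a
    simp only [Finset.mem_filter, Finset.mem_range, Finset.mem_image]
    constructor
    · rintro ⟨hlt, j, rfl⟩
      rw [mul_comm d g'] at hlt
      exact ⟨j, (Nat.mul_lt_mul_left hg').mp hlt, rfl⟩
    · rintro ⟨j, hj, rfl⟩
      exact ⟨by rw [mul_comm d g']; exact (Nat.mul_lt_mul_left hg').mpr hj, ⟨j, rfl⟩⟩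
  rw [h, Finset.card_image_of_injective _ (mul_right_injective₀ hg'.ne'), Finset.card_range]

lemma innerSumLens (g : ℕ) (hg : 0 < g) (k : ℤ) :
    ∑ b ∈ Finset.range g, Complex.exp (2 * (Real.pi : ℂ) * Complex.I * (k : ℂ) * (b : ℂ) / (g : ℂ))
      = if (g : ℤ) ∣ k then (g : ℂ) else 0 := by
  have hgC : (g : ℂ) ≠ 0 := Nat.cast_ne_zero.2 hg.ne'
  set ζ : ℂ := Complex.exp (2 * (Real.pi : ℂ) * Complex.I * (k : ℂ) / (g : ℂ)) with hζ
  have hterm : ∀ b : ℕ, Complex.exp (2 * (Real.pi : ℂ) * Complex.I * (k : ℂ) * (b : ℂ) / (g : ℂ)) = ζ ^ b := by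
    intro b
    rw [hζ, ← Complex.exp_nat_mul]
    ring_nf
  simp only [hterm]
  have hζg : ζ ^ g = 1 := by
    rw [hζ, ← Complex.exp_nat_mul]
    have : (g : ℂ) * (2 * (Real.pi : ℂ) * Complex.I * (k : ℂ) / (g : ℂ)) = (k : ℂ) * (2 * (Real.pi : ℂ) * Complex.I) := by
      field_simp
    rw [this, Complex.exp_int_mul_two_pi_mul_I]
  have hone : ζ = 1 ↔ (g : ℤ) ∣ k := by
    rw [hζ, Complex.exp_eq_one_iff]
    constructor
    · rintro ⟨j, hj⟩
      refine ⟨j, ?_⟩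
      have h2 : (2 : ℂ) * Real.pi * Complex.I ≠ 0 := by
        simp [Real.pi_ne_zero, Complex.I_ne_zero]
      field_simp at hj
      have h3 : (2 : ℂ) * Real.pi * Complex.I * (k : ℂ)
          = (2 : ℂ) * Real.pi * Complex.I * ((g : ℂ) * (j : ℂ)) := by
        linear_combination (2 : ℂ) * Real.pi * Complex.I * hj
      have h4 : (k : ℂ) = (g : ℂ) * (j : ℂ) := mul_left_cancel₀ h2 h3
      exact_mod_cast h4
    · rintro ⟨j, hj⟩
      refine ⟨j, ?_⟩
      rw [hj]
      push_cast
      field_simp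
  by_cases h : (g : ℤ) ∣ k
  · rw [if_pos h]
    have : ζ = 1 := hone.2 h
    simp [this]
  · rw [if_neg h]
    have hζne : ζ ≠ 1 := fun hc => h (hone.1 hc)
    rw [geom_sum_eq hζne, hζg]
    simp

/-- For all positive integers `n` and `p` and every integer `m`, writing
`g = gcd(n,p)`, one has
`∑_{a=0}^{g−1} ∑_{b=0}^{g−1} exp(2πi·m·a·b/g) = g·gcd(m, gcd(n,p))`.
(This evaluates the topological partition function of the 3+1D pure 2-gauge
theory of 2-gauge-group `B(Z_n,2)` on the space-time `S¹×L³(p)`, where `L³(p)`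
is the 3-dimensional lens space, giving `Z^top(S¹×L³(p)) = gcd(m,n,p)`.) -/
theorem partition_function_lens (n p : ℕ) (hn : 0 < n) (hp : 0 < p) (m : ℤ) :
    ∑ a ∈ Finset.range (Nat.gcd n p), ∑ b ∈ Finset.range (Nat.gcd n p),
      Complex.exp (2 * (Real.pi : ℂ) * Complex.I * (m : ℂ) * (a : ℂ) * (b : ℂ) /
        (Nat.gcd n p : ℂ))
      = (Nat.gcd n p : ℂ) * (Int.gcd m (Nat.gcd n p) : ℂ) := by
  set g := Nat.gcd n p with hgdef
  have hg : 0 < g := Nat.gcd_pos_of_pos_left p hn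
  have hstep : ∀ a ∈ Finset.range g,
      (∑ b ∈ Finset.range g, Complex.exp (2 * (Real.pi : ℂ) * Complex.I * (m : ℂ) * (a : ℂ) * (b : ℂ) / (g : ℂ)))
      = if (g : ℤ) ∣ m * a then (g : ℂ) else 0 := by
    intro a _
    have := innerSumLens g hg (m * a)
    simpa [mul_assoc, Int.cast_mul, mul_comm, mul_left_comm] using this
  rw [Finset.sum_congr rfl hstep, Finset.sum_ite, Finset.sum_const_zero, add_zero,
    Finset.sum_const, nsmul_eq_mul]
  -- now count the filter
  set d := Int.gcd m g with hddef
  have hd : 0 < d := by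
    have : (g : ℤ) ≠ 0 := Int.natCast_ne_zero.2 hg.ne'
    exact Int.gcd_pos_of_ne_zero_right m this
  have hdg : d ∣ g := Int.natCast_dvd_natCast.mp (Int.gcd_dvd_right m (g : ℤ))
  obtain ⟨g', hg'⟩ := hdg
  have hg'pos : 0 < g' := by
    rcases Nat.eq_zero_or_pos g' with h | h
    · rw [h, mul_zero] at hg'; omega
    · exact h
  have hdvd_iff : ∀ a : ℕ, ((g : ℤ) ∣ m * a ↔ g' ∣ a) := by
    intro a
    obtain ⟨m₁, hm₁⟩ : (d : ℤ) ∣ m := Int.gcd_dvd_left m (g : ℤ)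
    have hcop : IsCoprime m₁ (g' : ℤ) := by
      rw [Int.isCoprime_iff_gcd_eq_one]
      have hdne : (d : ℤ) ≠ 0 := Int.natCast_ne_zero.2 hd.ne'
      have h1 : m / (d : ℤ) = m₁ := by rw [hm₁]; exact Int.mul_ediv_cancel_left _ hdne
      have h2 : (g : ℤ) / (d : ℤ) = (g' : ℤ) := by
        rw [hg']; push_cast; exact Int.mul_ediv_cancel_left _ hdne
      have := Int.gcd_div_gcd_div_gcd (i := m) (j := (g : ℤ)) (by exact_mod_cast hd)
      rwa [h1, h2] at this
    constructor
    · intro hdvd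
      have : (d : ℤ) * (g' : ℤ) ∣ (d : ℤ) * (m₁ * a) := by
        have hge : (g : ℤ) = (d : ℤ) * (g' : ℤ) := by rw [hg']; push_cast; ring
        rw [← hge]
        rw [hm₁] at hdvd
        convert hdvd using 1; ring
      have h3 : (g' : ℤ) ∣ m₁ * a :=
        (mul_dvd_mul_iff_left (a := (d : ℤ)) (Int.natCast_ne_zero.2 hd.ne')).mp this
      have h4 : (g' : ℤ) ∣ (a : ℤ) := (hcop.symm.dvd_of_dvd_mul_left h3)
      exact_mod_cast h4
    · intro hdvd
      obtain ⟨c, hc⟩ := hdvd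
      refine ⟨m₁ * c, ?_⟩
      rw [hm₁, hc, hg']
      push_cast
      ring
  have hcount : (Finset.filter (fun a : ℕ => (g : ℤ) ∣ m * (a : ℤ)) (Finset.range g)).card = d := by
    have : (Finset.filter (fun a : ℕ => (g : ℤ) ∣ m * (a : ℤ)) (Finset.range g))
        = Finset.filter (fun a : ℕ => g' ∣ a) (Finset.range (d * g')) := by
      rw [← hg']
      apply Finset.filter_congr
      intro a _
      simp [hdvd_iff a]
    rw [this, count_multiples_aux d g' hg'pos]
  rw [hcount, hddef]
  ring
end

section
/- H²(B(Π₂,2); ℝ/ℤ) = Π₂ for finite Π₂: for every finite additive abelian group A, the additive group of functions f : A → ℝ/ℤ satisfying f(u) + f(w) = f(v) + f(u − v + w) for all u, v, w ∈ A, modulo its subgroup of constant functions, is isomorphic (as an additive group) to A. -/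
/-! 2-cocycles on the simplicial set `B(A,2)` (the Eilenberg–MacLane space
`K(A,2)` triangulated with a single vertex): an `M`-valued 2-cochain is a
function `f : A → M` on the triangles (labeled by elements of `A`), and the
2-cocycle condition coming from the tetrahedra of `B(A,2)` reads
`f(u) + f(w) = f(v) + f(u − v + w)` for all `u, v, w ∈ A`.  The
2-coboundaries are exactly the constant functions, since a 1-cochain is a
function on the single link of `B(A,2)`. -/

variable (A M : Type*) [AddCommGroup A] [AddCommGroup M]

/-- The additive group of `M`-valued 2-cocycles on `B(A,2)`. -/
def twoCocyclesB2 : AddSubgroup (A → M) where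
  carrier := {f | ∀ u v w : A, f u + f w = f v + f (u - v + w)}
  zero_mem' := by intro u v w; simp
  add_mem' := by
    intro f g hf hg u v w
    have h1 := hf u v w
    have h2 := hg u v w
    simp only [Pi.add_apply]
    rw [add_add_add_comm, h1, h2, add_add_add_comm]
  neg_mem' := by
    intro f hf u v w
    have h1 := hf u v w
    simp only [Pi.neg_apply]
    rw [← neg_add, h1, neg_add]

/-- The subgroup of constant functions (the 2-coboundaries on `B(A,2)`). -/
def constantsB2 : AddSubgroup (A → M) where
  carrier := {f | ∃ c : M, ∀ x : A, f x = c}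
  zero_mem' := ⟨0, fun _ => rfl⟩
  add_mem' := by
    rintro f g ⟨c, hc⟩ ⟨d, hd⟩
    exact ⟨c + d, fun x => by simp [hc x, hd x]⟩
  neg_mem' := by
    rintro f ⟨c, hc⟩
    exact ⟨-c, fun x => by simp [hc x]⟩

section AuxCocycle

variable {A M}

/-- The map sending a cocycle `f` to the additive hom `x ↦ f x - f 0`. -/
private def cocycleHom : (twoCocyclesB2 A M) →+ (A →+ M) where
  toFun f :=
    { toFun := fun x => f.1 x - f.1 0
      map_zero' := sub_self _
      map_add' := by
        intro u w
        have h := f.2 u 0 w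
        rw [sub_zero] at h
        have h2 : f.1 (u + w) = f.1 u + f.1 w - f.1 0 := eq_sub_of_add_eq' h.symm
        show f.1 (u + w) - f.1 0 = (f.1 u - f.1 0) + (f.1 w - f.1 0)
        rw [h2]; abel }
  map_zero' := by ext x; simp
  map_add' f g := by ext x; simp; abel

private lemma cocycleHom_surjective :
    Function.Surjective (cocycleHom : (twoCocyclesB2 A M) →+ (A →+ M)) := by
  intro g
  refine ⟨⟨⇑g, fun u v w => ?_⟩, ?_⟩
  · simp only [map_add, map_sub]; abel
  · ext x; simp [cocycleHom]

private lemma cocycleHom_ker :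
    (constantsB2 A M).addSubgroupOf (twoCocyclesB2 A M) =
      (cocycleHom : (twoCocyclesB2 A M) →+ (A →+ M)).ker := by
  ext f
  constructor
  · rintro ⟨c, hc⟩
    have hc0 : f.1 0 = c := hc 0
    ext x
    show f.1 x - f.1 0 = 0
    rw [show f.1 x = c from hc x, hc0, sub_self]
  · intro h
    refine ⟨f.1 0, fun x => ?_⟩
    have := DFunLike.congr_fun h x
    have hx : f.1 x - f.1 0 = 0 := this
    exact sub_eq_zero.mp hx

end AuxCocycle

section AuxDual

private noncomputable def zmodPhi (m : ℕ) [NeZero m] :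
    ZMod m →+ (ZMod m →+ AddCircle (1 : ℝ)) where
  toFun x := ZMod.toAddCircle.comp (AddMonoidHom.mulLeft x)
  map_zero' := by ext y; simp
  map_add' x y := by ext z; simp [add_mul]

private lemma zmodPhi_injective (m : ℕ) [NeZero m] : Function.Injective (zmodPhi m) := by
  intro x y h
  have := DFunLike.congr_fun h (1 : ZMod m)
  simpa [zmodPhi] using this

private lemma zmodPhi_surjective (m : ℕ) [NeZero m] : Function.Surjective (zmodPhi m) := by
  intro f
  obtain ⟨r, hr⟩ := QuotientAddGroup.mk_surjective (f 1)
  have hm1 : m • (1 : ZMod m) = 0 := by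
    simp [nsmul_eq_mul, ZMod.natCast_self]
  have hms : m • f 1 = 0 := by rw [← map_nsmul, hm1, map_zero]
  have hcoe : ((m • r : ℝ) : AddCircle (1 : ℝ)) = m • ((r : ℝ) : AddCircle (1 : ℝ)) := rfl
  rw [← hr, ← hcoe] at hms
  have hmem : (m • r : ℝ) ∈ AddSubgroup.zmultiples (1 : ℝ) :=
    (QuotientAddGroup.eq_zero_iff _).mp hms
  obtain ⟨k, hk⟩ := AddSubgroup.mem_zmultiples_iff.mp hmem
  have hmR : (m : ℝ) ≠ 0 := Nat.cast_ne_zero.mpr (NeZero.ne m)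
  have hrk : r = (k : ℝ) / m := by
    rw [zsmul_eq_mul, mul_one] at hk
    rw [nsmul_eq_mul] at hk
    field_simp
    linarith [hk]
  refine ⟨(k : ZMod m), ?_⟩
  have h1 : zmodPhi m (k : ZMod m) 1 = f 1 := by
    have : zmodPhi m (k : ZMod m) 1 = ZMod.toAddCircle ((k : ZMod m)) := by
      simp [zmodPhi]
    rw [this, ZMod.toAddCircle_intCast, ← hr, hrk]
  ext a
  obtain ⟨j, rfl⟩ := ZMod.intCast_surjective a
  have e1 : ((j : ZMod m)) = j • (1 : ZMod m) := (zsmul_one j).symm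
  rw [e1, map_zsmul, map_zsmul, h1]

/-- `Hom(ZMod m, ℝ/ℤ) ≃ ZMod m`. -/
private noncomputable def zmodHomEquiv (m : ℕ) [NeZero m] :
    (ZMod m →+ AddCircle (1 : ℝ)) ≃+ ZMod m :=
  (AddEquiv.ofBijective (zmodPhi m) ⟨zmodPhi_injective m, zmodPhi_surjective m⟩).symm

/-- Pontryagin-type duality: `Hom(A, ℝ/ℤ) ≃+ A` for finite `A`. -/
private lemma dualEquiv (A : Type*) [AddCommGroup A] [Finite A] :
    Nonempty ((A →+ AddCircle (1 : ℝ)) ≃+ A) := by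
  classical
  obtain ⟨ι, hι, n, hn, ⟨E⟩⟩ := AddCommGroup.equiv_directSum_zmod_of_finite' A
  have hn' : ∀ i, NeZero (n i) := fun i => ⟨by have := hn i; omega⟩
  exact ⟨(AddEquiv.addMonoidHomCongrLeft (E.trans (DirectSum.addEquivProd _))
      ).trans <|
    ((Pi.addMonoidHomAddEquiv _ _).trans
      (AddEquiv.piCongrRight fun i => zmodHomEquiv (n i))).trans <|
    (DirectSum.addEquivProd _).symm.trans E.symm⟩

end AuxDual

/-- **`H²(B(Π₂,2); ℝ/ℤ) = Π₂` for finite `Π₂`**: for every finite additive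
abelian group `A`, the group of functions `f : A → ℝ/ℤ` satisfying the
2-cocycle condition `f(u) + f(w) = f(v) + f(u − v + w)`, modulo its subgroup
of constant functions, is isomorphic as an additive group to `A`. -/
theorem H2_BA2_circle (A : Type*) [AddCommGroup A] [Fintype A] :
    Nonempty
      ((twoCocyclesB2 A (AddCircle (1 : ℝ)) ⧸
          (constantsB2 A (AddCircle (1 : ℝ))).addSubgroupOf
            (twoCocyclesB2 A (AddCircle (1 : ℝ)))) ≃+ A) := by
  obtain ⟨e⟩ := dualEquiv A
  exact ⟨((QuotientAddGroup.quotientAddEquivOfEq cocycleHom_ker).trans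
    (QuotientAddGroup.quotientKerEquivOfSurjective _ cocycleHom_surjective)).trans e⟩
end
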